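/- arXiv:2508.15242 — 8 statements merged into one kernel-verified Lean document; each statement's English description precedes it below -/
import Mathlib

section
/- Let X and Y be finite R-modules, and suppose 0 → K → F → X → 0 and 0 → K' → F' → Y → 0 are short exact sequences of R-modules in which F and F' are finitely generated projective. If the R-lattices K and K' are projectively equivalent, then X ∼ Y. (Injectivity of the map Φ from finite modules up to equivalence to lattices up to projective equivalence.) -/
/-- `𝒪` is one of the rings `ℤ`, `ℤ[1/2]`, or `ℤ_p` for some prime `p`. -/
def IsAllowedBase (𝒪 : Type) [CommRing 𝒪] : Prop :=
  Nonempty (𝒪 ≃+* ℤ) ∨ Nonempty (𝒪 ≃+* Localization.Away (2 : ℤ)) ∨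
    ∃ (p : ℕ) (hp : p.Prime), Nonempty (𝒪 ≃+* @PadicInt p ⟨hp⟩)

/-- Projective dimension at most one. -/
def PdLeOne (R : Type) [Ring R] (X : Type) [AddCommGroup X] [Module R X] : Prop :=
  ∃ (P : Type) (_ : AddCommGroup P) (_ : Module R P) (f : P →ₗ[R] X),
    Function.Surjective f ∧ Module.Projective R P ∧
      Module.Projective R (LinearMap.ker f)

/-- Equivalence of finite `R`-modules. -/
def ModEquiv (R : Type) [Ring R]
    (X : Type) [AddCommGroup X] [Module R X]
    (Y : Type) [AddCommGroup Y] [Module R Y] : Prop :=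
  ∃ (M : Type) (_ : AddCommGroup M) (_ : Module R M)
    (N : Type) (_ : AddCommGroup N) (_ : Module R N),
      Finite M ∧ Finite N ∧ Nonempty (M ≃ₗ[R] N) ∧
      ∃ (M' M'' : Submodule R M) (N' N'' : Submodule R N),
        M' ≤ M'' ∧ N' ≤ N'' ∧
        PdLeOne R M' ∧ PdLeOne R N' ∧
        PdLeOne R (M ⧸ M'') ∧ PdLeOne R (N ⧸ N'') ∧
        Nonempty ((M'' ⧸ (M'.comap M''.subtype)) ≃ₗ[R] X) ∧
        Nonempty ((N'' ⧸ (N'.comap N''.subtype)) ≃ₗ[R] Y)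

/-- Two `R`-modules are projectively equivalent if they become isomorphic after
adding finitely generated projective direct summands. -/
def ProjEquiv (R : Type) [Ring R]
    (L : Type) [AddCommGroup L] [Module R L]
    (L' : Type) [AddCommGroup L'] [Module R L'] : Prop :=
  ∃ (F : Type) (_ : AddCommGroup F) (_ : Module R F)
    (F' : Type) (_ : AddCommGroup F') (_ : Module R F'),
      Module.Finite R F ∧ Module.Projective R F ∧
      Module.Finite R F' ∧ Module.Projective R F' ∧
      Nonempty ((L × F') ≃ₗ[R] (L' × F))


section Base
variable {𝒪 : Type} [CommRing 𝒪]

private lemma powers_two_le : Submonoid.powers (2:ℤ) ≤ nonZeroDivisors ℤ := by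
  rintro x ⟨k, rfl⟩
  exact mem_nonZeroDivisors_of_ne_zero (pow_ne_zero k two_ne_zero)

private lemma tf_of_equiv {A : Type} [CommRing A] [IsDomain A] [CharZero A]
    (e : 𝒪 ≃+* A) {n : ℕ} (hn : n ≠ 0) {a : 𝒪} (ha : n • a = 0) : a = 0 := by
  have h1 : (n : A) * e a = 0 := by
    rw [← nsmul_eq_mul, ← map_nsmul, ha, map_zero]
  rcases mul_eq_zero.mp h1 with h | h
  · exact absurd (Nat.cast_eq_zero.mp h) hn
  · exact e.injective (by rw [h, map_zero])

lemma allowed_tf (h : IsAllowedBase 𝒪) {n : ℕ} (hn : n ≠ 0) {a : 𝒪}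
    (ha : n • a = 0) : a = 0 := by
  rcases h with he | he | ⟨p, hp, he⟩
  · obtain ⟨e⟩ := he
    exact tf_of_equiv e hn ha
  · haveI : IsDomain (Localization.Away (2:ℤ)) :=
      IsLocalization.isDomain_of_le_nonZeroDivisors (Localization.Away (2:ℤ)) powers_two_le
    haveI : CharZero (Localization.Away (2:ℤ)) :=
      charZero_of_injective_algebraMap (IsLocalization.injective _ powers_two_le)
    obtain ⟨e⟩ := he
    exact tf_of_equiv e hn ha
  · haveI : Fact p.Prime := ⟨hp⟩
    obtain ⟨e⟩ := he
    exact tf_of_equiv e hn ha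

private lemma finite_quot_int (n : ℕ) (hn : n ≠ 0) :
    Finite (ℤ ⧸ Ideal.span {(n : ℤ)}) := by
  haveI : NeZero ((n:ℤ).natAbs) := ⟨by simpa using hn⟩
  exact Finite.of_equiv _ (Int.quotientSpanEquivZMod (n:ℤ)).symm.toEquiv

private lemma finite_quot_loc (n : ℕ) (hn : n ≠ 0) :
    Finite (Localization.Away (2:ℤ) ⧸ Ideal.span {(n : Localization.Away (2:ℤ))}) := by
  set v := n.factorization 2 with hv
  set m := n / 2 ^ v with hm
  have hm0 : m ≠ 0 := (Nat.ordCompl_pos 2 hn).ne'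
  have hcop : Nat.Coprime 2 m := Nat.coprime_ordCompl Nat.prime_two hn
  have hN : n = 2 ^ v * m := (Nat.ordProj_mul_ordCompl_eq_self n 2).symm
  have h2unit : IsUnit (2 : Localization.Away (2:ℤ)) := by
    have := IsLocalization.Away.mul_invSelf (S := Localization.Away (2:ℤ)) (2:ℤ)
    exact IsUnit.of_mul_eq_one _ (by simpa using this)
  have hspan : Ideal.span {(n : Localization.Away (2:ℤ))} =
      Ideal.span {(m : Localization.Away (2:ℤ))} := by
    have : (n : Localization.Away (2:ℤ)) = (2:Localization.Away (2:ℤ))^v * (m:Localization.Away (2:ℤ)) := by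
      rw [hN]; push_cast; ring
    rw [this, Ideal.span_singleton_mul_left_unit (h2unit.pow v)]
  rw [hspan]
  set I := Ideal.span {(m : Localization.Away (2:ℤ))} with hI
  set g : ℤ →+* (Localization.Away (2:ℤ) ⧸ I) :=
    (Ideal.Quotient.mk I).comp (algebraMap ℤ (Localization.Away (2:ℤ))) with hg
  have hmzero : g (m:ℤ) = 0 := by
    have t : algebraMap ℤ (Localization.Away (2:ℤ)) ((m:ℕ):ℤ) =
        ((m:ℕ) : Localization.Away (2:ℤ)) := map_natCast _ _
    show Ideal.Quotient.mk I (algebraMap ℤ (Localization.Away (2:ℤ)) ((m:ℕ):ℤ)) = 0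
    rw [t]
    exact Ideal.Quotient.eq_zero_iff_mem.mpr (Ideal.subset_span rfl)
  have hcpz : IsCoprime (2:ℤ) ((m:ℤ)) := by
    have := (Nat.isCoprime_iff_coprime (m := 2) (n := m)).mpr hcop
    simpa using this
  obtain ⟨u, w, huw⟩ := hcpz
  have h2u : g 2 * g u = 1 := by
    have h1 : g u * g 2 + g w * g (m:ℤ) = 1 := by
      rw [← map_mul g u 2, ← map_mul g w ((m:ℕ):ℤ), ← map_add, huw, map_one]
    rw [hmzero] at h1
    linear_combination h1
  have hsurj : Function.Surjective g := by
    intro x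
    obtain ⟨y, rfl⟩ := Ideal.Quotient.mk_surjective x
    obtain ⟨⟨r, s⟩, hys⟩ := IsLocalization.surj (Submonoid.powers (2:ℤ)) y
    obtain ⟨k, hk⟩ := s.2
    have hk' : (2:ℤ)^k = (s : ℤ) := hk
    have hbegin : y * algebraMap ℤ (Localization.Away (2:ℤ)) ((2:ℤ)^k) =
        algebraMap ℤ (Localization.Away (2:ℤ)) r := by
      rw [hk']; exact hys
    refine ⟨r * u ^ k, ?_⟩
    have h2 : Ideal.Quotient.mk I y * g ((2:ℤ)^k) = g r := by
      have t1 : Ideal.Quotient.mk I (y * algebraMap ℤ (Localization.Away (2:ℤ)) ((2:ℤ)^k)) =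
          g r := congrArg (Ideal.Quotient.mk I) hbegin
      have t2 : Ideal.Quotient.mk I (y * algebraMap ℤ (Localization.Away (2:ℤ)) ((2:ℤ)^k)) =
          Ideal.Quotient.mk I y * g ((2:ℤ)^k) := map_mul _ _ _
      rw [← t2]; exact t1
    have e1 : g ((2:ℤ)^k) * g (u^k) = 1 := by
      have f2 : g ((2:ℤ)^k * u^k) = g ((2:ℤ)^k) * g (u^k) := map_mul _ _ _
      have f3 : ((2:ℤ)^k * u^k) = (2*u)^k := (mul_pow 2 u k).symm
      have f4 : g ((2*u:ℤ)^k) = (g (2*u))^k := map_pow _ _ _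
      have f5 : g (2*u : ℤ) = g 2 * g u := map_mul _ _ _
      rw [← f2, f3, f4, f5, h2u]
      exact one_pow (M := Localization.Away (2:ℤ) ⧸ I) k
    have f1 : g (r * u ^ k) = g r * g (u^k) := map_mul _ _ _
    rw [f1, ← h2]
    linear_combination (Ideal.Quotient.mk I y) * e1
  haveI hfin := finite_quot_int m hm0
  have hker : ∀ a ∈ Ideal.span {((m:ℕ) : ℤ)}, g a = 0 := by
    intro a ha
    obtain ⟨c, rfl⟩ := Ideal.mem_span_singleton.mp ha
    rw [map_mul, hmzero]
    exact zero_mul (g c)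
  have hliftsurj : Function.Surjective (Ideal.Quotient.lift (Ideal.span {((m:ℕ):ℤ)}) g hker) := by
    intro x
    obtain ⟨r, hr⟩ := hsurj x
    exact ⟨Ideal.Quotient.mk _ r, by rw [Ideal.Quotient.lift_mk]; exact hr⟩
  exact Finite.of_surjective _ hliftsurj

private lemma finite_quot_padic (p : ℕ) [Fact p.Prime] (n : ℕ) (hn : n ≠ 0) :
    Finite (PadicInt p ⧸ Ideal.span {(n : PadicInt p)}) := by
  have hp : p.Prime := Fact.out
  set v := n.factorization p with hv
  set m := n / p ^ v with hm
  have hm0 : m ≠ 0 := (Nat.ordCompl_pos p hn).ne'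
  have hcop : Nat.Coprime p m := Nat.coprime_ordCompl hp hn
  have hN : n = p ^ v * m := (Nat.ordProj_mul_ordCompl_eq_self n p).symm
  have hmunit : IsUnit ((m : ℤ_[p])) := by
    rw [PadicInt.isUnit_iff]
    have hle : ‖((m:ℤ) : ℤ_[p])‖ ≤ 1 := PadicInt.norm_le_one _
    have hnd : ¬ ((p:ℤ) ∣ (m:ℤ)) := by
      rw [Int.natCast_dvd_natCast]
      exact (Nat.Prime.coprime_iff_not_dvd hp).mp hcop
    have hlt : ¬ (‖((m:ℤ) : ℤ_[p])‖ < 1) := fun hc =>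
      hnd ((PadicInt.norm_int_lt_one_iff_dvd _).mp hc)
    have : ‖((m:ℤ) : ℤ_[p])‖ = 1 := le_antisymm hle (not_lt.mp hlt)
    simpa using this
  have hdvd : (n : ℤ_[p]) ∣ ((p:ℤ_[p]))^v := by
    have hcast : (n : ℤ_[p]) = (p:ℤ_[p])^v * (m:ℤ_[p]) := by rw [hN]; push_cast; ring
    rw [hcast]
    exact (IsUnit.mul_right_dvd hmunit).mpr dvd_rfl
  have hle : Ideal.span {((p:ℤ_[p]))^v} ≤ Ideal.span {(n : ℤ_[p])} :=
    Ideal.span_singleton_le_span_singleton.mpr hdvd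
  have hfin1 : Finite (ℤ_[p] ⧸ Ideal.span {((p:ℤ_[p]))^v}) := by
    have hker := PadicInt.ker_toZModPow (p := p) v
    haveI : NeZero (p ^ v) := ⟨pow_ne_zero v hp.ne_zero⟩
    have e := RingHom.quotientKerEquivOfSurjective
      (ZMod.ringHom_surjective (PadicInt.toZModPow (p := p) v))
    rw [← hker]
    exact Finite.of_equiv _ e.symm.toEquiv
  have hfact : Function.Surjective (Ideal.Quotient.factor hle) := by
    intro x
    obtain ⟨y, rfl⟩ := Ideal.Quotient.mk_surjective x
    exact ⟨Ideal.Quotient.mk _ y, Ideal.Quotient.factor_mk hle y⟩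
  exact Finite.of_surjective _ hfact

lemma allowed_finite_quot {𝒪 : Type} [CommRing 𝒪] (h : IsAllowedBase 𝒪) (n : ℕ) (hn : n ≠ 0) :
    Finite (𝒪 ⧸ Ideal.span {(n : 𝒪)}) := by
  have transfer : ∀ (A : Type) [CommRing A], ∀ (e : 𝒪 ≃+* A),
      Finite (A ⧸ Ideal.span {(n:A)}) → Finite (𝒪 ⧸ Ideal.span {(n:𝒪)}) := by
    intro A _ e hA
    have hmap : Ideal.span {(n:A)} = Ideal.map (e : 𝒪 →+* A) (Ideal.span {(n:𝒪)}) := by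
      rw [Ideal.map_span, Set.image_singleton, map_natCast]
    exact Finite.of_equiv _ (Ideal.quotientEquiv _ _ e hmap).symm.toEquiv
  rcases h with he | he | ⟨p, hp, he⟩
  · obtain ⟨e⟩ := he
    exact transfer _ e (finite_quot_int n hn)
  · obtain ⟨e⟩ := he
    exact transfer _ e (finite_quot_loc n hn)
  · haveI : Fact p.Prime := ⟨hp⟩
    obtain ⟨e⟩ := he
    exact transfer _ e (finite_quot_padic p n hn)

end Base

section Helpers

private lemma nsmul_card_zero {A : Type} [AddCommGroup A] [Finite A] (a : A) :
    Nat.card A • a = 0 := by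
  haveI : Fintype A := Fintype.ofFinite A
  rw [Nat.card_eq_fintype_card]
  exact card_nsmul_eq_zero

variable {R : Type} [Ring R]

private lemma pdLeOne_of_surj {P Z : Type} [AddCommGroup P] [Module R P]
    [AddCommGroup Z] [Module R Z] (f : P →ₗ[R] Z) (hf : Function.Surjective f)
    (hP : Module.Projective R P) (hker : Module.Projective R (LinearMap.ker f)) :
    PdLeOne R Z :=
  ⟨P, inferInstance, inferInstance, f, hf, hP, hker⟩

private lemma pdLeOne_of_subsingleton (Z : Type) [AddCommGroup Z] [Module R Z]
    [Subsingleton Z] : PdLeOne R Z := by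
  haveI : Subsingleton (LinearMap.ker (LinearMap.id : Z →ₗ[R] Z)) :=
    ⟨fun a b => Subtype.ext (Subsingleton.elim _ _)⟩
  exact ⟨Z, inferInstance, inferInstance, LinearMap.id, Function.surjective_id,
    Module.Projective.of_basis (Module.Basis.empty (ι := Fin 0) Z),
    Module.Projective.of_basis (Module.Basis.empty (ι := Fin 0) _)⟩

private lemma finite_of_sub_quot {M : Type} [AddCommGroup M] [Module R M]
    (N : Submodule R M) (h1 : Finite ↥N) (h2 : Finite (M ⧸ N)) : Finite M := by
  set sec : (M ⧸ N) → M := Function.surjInv (Submodule.mkQ_surjective N) with hsec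
  have hsec' : ∀ q, N.mkQ (sec q) = q := fun q => Function.surjInv_eq _ q
  have hs : Function.Surjective (fun p : ↥N × (M ⧸ N) => (p.1 : M) + sec p.2) := by
    intro x
    refine ⟨(⟨x - sec (N.mkQ x), ?_⟩, N.mkQ x), ?_⟩
    · have h0 : N.mkQ (x - sec (N.mkQ x)) = 0 := by
        rw [map_sub, hsec']; exact sub_self _
      rwa [Submodule.mkQ_apply, Submodule.Quotient.mk_eq_zero] at h0
    · show (x - sec (N.mkQ x)) + sec (N.mkQ x) = x
      exact sub_add_cancel x _
  exact Finite.of_surjective _ hs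

private lemma topQuotEquiv {M X : Type} [AddCommGroup M] [Module R M]
    [AddCommGroup X] [Module R X]
    (g : M →ₗ[R] X) (hg : Function.Surjective g) (N : Submodule R M)
    (hN : LinearMap.ker g = N) :
    Nonempty ((↥(⊤ : Submodule R M) ⧸ (N.comap (⊤ : Submodule R M).subtype)) ≃ₗ[R] X) := by
  set h : ↥(⊤ : Submodule R M) →ₗ[R] X := g.comp (⊤ : Submodule R M).subtype with hh
  have hs : Function.Surjective h := by
    intro x
    obtain ⟨m, hm⟩ := hg x
    exact ⟨⟨m, trivial⟩, hm⟩
  have hk : N.comap (⊤ : Submodule R M).subtype = LinearMap.ker h := by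
    rw [hh, LinearMap.ker_comp, hN]
  exact ⟨(Submodule.quotEquivOfEq _ _ hk).trans (h.quotKerEquivOfSurjective hs)⟩

private lemma allowed_finite_module {𝒪 : Type} [CommRing 𝒪] (h : IsAllowedBase 𝒪)
    (n : ℕ) (hn : n ≠ 0) (T : Type) [AddCommGroup T] [Module 𝒪 T] [Module.Finite 𝒪 T]
    (htor : ∀ t : T, n • t = 0) : Finite T := by
  haveI hq := allowed_finite_quot h n hn
  obtain ⟨k, ξ, hξ⟩ := Module.Finite.exists_fin' 𝒪 T
  set I := Ideal.span {(n:𝒪)} with hI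
  set sec : (𝒪 ⧸ I) → 𝒪 := Function.surjInv Ideal.Quotient.mk_surjective with hsec
  have hsec' : ∀ q, Ideal.Quotient.mk I (sec q) = q := fun q => Function.surjInv_eq _ q
  have hs : Function.Surjective (fun v : Fin k → 𝒪 ⧸ I => ξ (fun i => sec (v i))) := by
    intro t
    obtain ⟨a, rfl⟩ := hξ t
    refine ⟨fun i => Ideal.Quotient.mk I (a i), ?_⟩
    set b : Fin k → 𝒪 := fun i => sec (Ideal.Quotient.mk I (a i)) with hb
    have hmem : ∀ i, (n:𝒪) ∣ (b i - a i) := by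
      intro i
      have heq : Ideal.Quotient.mk I (b i) = Ideal.Quotient.mk I (a i) := hsec' _
      have := Ideal.Quotient.eq.mp heq
      exact Ideal.mem_span_singleton.mp this
    choose c hc using hmem
    have hba : b - a = (n:𝒪) • c := by
      funext i
      show b i - a i = (n:𝒪) • c i
      rw [smul_eq_mul]; exact hc i
    have hz : ξ b - ξ a = 0 := by
      rw [← map_sub, hba, map_smul, Nat.cast_smul_eq_nsmul, htor]
    show ξ b = ξ a
    exact sub_eq_zero.mp hz
  exact Finite.of_surjective _ hs

end Helpers

set_option maxHeartbeats 2000000 in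
/-- If `0 → K → F → X → 0`, `0 → K' → F' → Y → 0` are short exact sequences of
modules over `R = 𝒪[Γ₀]` with `X`, `Y` finite and `F`, `F'` finitely generated
projective, and if the lattices `K` and `K'` are projectively equivalent,
then `X ∼ Y` (injectivity of `Φ`). -/
theorem phi_injective
    (𝒪 : Type) [CommRing 𝒪] (h𝒪 : IsAllowedBase 𝒪)
    (Γ₀ : Type) [Group Γ₀] [Finite Γ₀]
    (X : Type) [AddCommGroup X] [Module (MonoidAlgebra 𝒪 Γ₀) X] [Finite X]
    (Y : Type) [AddCommGroup Y] [Module (MonoidAlgebra 𝒪 Γ₀) Y] [Finite Y]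
    (K : Type) [AddCommGroup K] [Module (MonoidAlgebra 𝒪 Γ₀) K]
    (F : Type) [AddCommGroup F] [Module (MonoidAlgebra 𝒪 Γ₀) F]
    (K' : Type) [AddCommGroup K'] [Module (MonoidAlgebra 𝒪 Γ₀) K']
    (F' : Type) [AddCommGroup F'] [Module (MonoidAlgebra 𝒪 Γ₀) F']
    (hF : Module.Finite (MonoidAlgebra 𝒪 Γ₀) F)
    (hFproj : Module.Projective (MonoidAlgebra 𝒪 Γ₀) F)
    (hF' : Module.Finite (MonoidAlgebra 𝒪 Γ₀) F')
    (hF'proj : Module.Projective (MonoidAlgebra 𝒪 Γ₀) F')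
    (i : K →ₗ[MonoidAlgebra 𝒪 Γ₀] F) (π : F →ₗ[MonoidAlgebra 𝒪 Γ₀] X)
    (i' : K' →ₗ[MonoidAlgebra 𝒪 Γ₀] F') (π' : F' →ₗ[MonoidAlgebra 𝒪 Γ₀] Y)
    (hi : Function.Injective i) (hπ : Function.Surjective π)
    (hexact : LinearMap.range i = LinearMap.ker π)
    (hi' : Function.Injective i') (hπ' : Function.Surjective π')
    (hexact' : LinearMap.range i' = LinearMap.ker π')
    (hKK' : ProjEquiv (MonoidAlgebra 𝒪 Γ₀) K K') :
    ModEquiv (MonoidAlgebra 𝒪 Γ₀) X Y := by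
  classical
  obtain ⟨P, iP1, iP2, Q, iQ1, iQ2, hPfin, hPproj, hQfin, hQproj, ⟨φ⟩⟩ := hKK'
  haveI := hPfin; haveI := hPproj; haveI := hQfin; haveI := hQproj
  haveI := hF; haveI := hFproj; haveI := hF'; haveI := hF'proj
  -- the integer n kills X and Y
  set n : ℕ := Nat.card X * Nat.card Y with hn_def
  have hn : n ≠ 0 := by
    haveI : Nonempty X := ⟨0⟩
    haveI : Nonempty Y := ⟨0⟩
    exact Nat.mul_ne_zero Nat.card_pos.ne' Nat.card_pos.ne'
  have hnX : ∀ x : X, n • x = 0 := by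
    intro x
    rw [hn_def, mul_comm, mul_smul, nsmul_card_zero, smul_zero]
  have hnY : ∀ y : Y, n • y = 0 := by
    intro y
    rw [hn_def, mul_smul, nsmul_card_zero, smul_zero]
  -- basic maps
  set ι : (K × Q) →ₗ[(MonoidAlgebra 𝒪 Γ₀)] (F × Q) := i.prodMap LinearMap.id with hι_def
  set ι' : (K' × P) →ₗ[(MonoidAlgebra 𝒪 Γ₀)] (F' × P) := i'.prodMap LinearMap.id with hι'_def
  set ρ : (F × Q) →ₗ[(MonoidAlgebra 𝒪 Γ₀)] X := π.comp (LinearMap.fst (MonoidAlgebra 𝒪 Γ₀) F Q) with hρ_def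
  set ρ' : (F' × P) →ₗ[(MonoidAlgebra 𝒪 Γ₀)] Y := π'.comp (LinearMap.fst (MonoidAlgebra 𝒪 Γ₀) F' P) with hρ'_def
  have hιapp : ∀ w : K × Q, ι w = (i w.1, w.2) := by
    intro w
    rw [hι_def, LinearMap.prodMap_apply, LinearMap.id_apply]
  have hι'app : ∀ w : K' × P, ι' w = (i' w.1, w.2) := by
    intro w
    rw [hι'_def, LinearMap.prodMap_apply, LinearMap.id_apply]
  have hρapp : ∀ z : F × Q, ρ z = π z.1 := fun z => rfl
  have hρ'app : ∀ z : F' × P, ρ' z = π' z.1 := fun z => rfl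
  have hιinj : Function.Injective ι := by
    intro a b h
    rw [hιapp, hιapp, Prod.mk.injEq] at h
    exact Prod.ext (hi h.1) h.2
  have hι'inj : Function.Injective ι' := by
    intro a b h
    rw [hι'app, hι'app, Prod.mk.injEq] at h
    exact Prod.ext (hi' h.1) h.2
  have hrangeι : LinearMap.range ι = LinearMap.ker ρ := by
    ext z
    constructor
    · rintro ⟨w, rfl⟩
      have hm : i w.1 ∈ LinearMap.ker π := hexact ▸ LinearMap.mem_range_self i w.1
      refine LinearMap.mem_ker.mpr ?_
      rw [hρapp, hιapp]
      exact LinearMap.mem_ker.mp hm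
    · intro hz
      have h0 : π z.1 = 0 := by rw [← hρapp]; exact LinearMap.mem_ker.mp hz
      have h1 : z.1 ∈ LinearMap.range i := by
        rw [hexact]; exact LinearMap.mem_ker.mpr h0
      obtain ⟨k, hk⟩ := h1
      refine ⟨(k, z.2), ?_⟩
      rw [hιapp]
      exact Prod.ext hk rfl
  have hrangeι' : LinearMap.range ι' = LinearMap.ker ρ' := by
    ext z
    constructor
    · rintro ⟨w, rfl⟩
      have hm : i' w.1 ∈ LinearMap.ker π' := hexact' ▸ LinearMap.mem_range_self i' w.1
      refine LinearMap.mem_ker.mpr ?_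
      rw [hρ'app, hι'app]
      exact LinearMap.mem_ker.mp hm
    · intro hz
      have h0 : π' z.1 = 0 := by rw [← hρ'app]; exact LinearMap.mem_ker.mp hz
      have h1 : z.1 ∈ LinearMap.range i' := by
        rw [hexact']; exact LinearMap.mem_ker.mpr h0
      obtain ⟨k, hk⟩ := h1
      refine ⟨(k, z.2), ?_⟩
      rw [hι'app]
      exact Prod.ext hk rfl
  -- the module W = (G × G') ⧸ Δ
  set δ : (K × Q) →ₗ[(MonoidAlgebra 𝒪 Γ₀)] ((F × Q) × (F' × P)) :=
    LinearMap.prod ι (ι'.comp φ.toLinearMap) with hδ_def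
  have hδapp : ∀ z : K × Q, δ z = (ι z, ι' (φ z)) := fun z => rfl
  set Δ : Submodule (MonoidAlgebra 𝒪 Γ₀) ((F × Q) × (F' × P)) := LinearMap.range δ with hΔ_def
  set jG : (F × Q) →ₗ[(MonoidAlgebra 𝒪 Γ₀)] (((F × Q) × (F' × P)) ⧸ Δ) :=
    Δ.mkQ.comp (LinearMap.inl (MonoidAlgebra 𝒪 Γ₀) (F × Q) (F' × P)) with hjG_def
  set jG' : (F' × P) →ₗ[(MonoidAlgebra 𝒪 Γ₀)] (((F × Q) × (F' × P)) ⧸ Δ) :=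
    Δ.mkQ.comp (LinearMap.inr (MonoidAlgebra 𝒪 Γ₀) (F × Q) (F' × P)) with hjG'_def
  have hjGapp : ∀ v : F × Q, jG v = Submodule.Quotient.mk (v, 0) := fun v => rfl
  have hjG'app : ∀ v : F' × P, jG' v = Submodule.Quotient.mk (0, v) := fun v => rfl
  -- multiplication by n on G' = F' × P
  set nId : (F' × P) →ₗ[(MonoidAlgebra 𝒪 Γ₀)] (F' × P) :=
    { toFun := fun y => n • y
      map_add' := fun a b => smul_add n a b
      map_smul' := fun r y => smul_comm n r y } with hnId_def
  have hnIdapp : ∀ y : F' × P, nId y = n • y := fun y => rfl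
  set S : Submodule (MonoidAlgebra 𝒪 Γ₀) (((F × Q) × (F' × P)) ⧸ Δ) := LinearMap.range (jG'.comp nId) with hS_def
  set fA : (F' × P) →ₗ[(MonoidAlgebra 𝒪 Γ₀)] ((((F × Q) × (F' × P)) ⧸ Δ) ⧸ S) := S.mkQ.comp jG' with hfA_def
  set fB : (F × Q) →ₗ[(MonoidAlgebra 𝒪 Γ₀)] ((((F × Q) × (F' × P)) ⧸ Δ) ⧸ S) := S.mkQ.comp jG with hfB_def
  -- injectivity of jG'
  have hjG'inj : Function.Injective jG' := by
    rw [← LinearMap.ker_eq_bot, LinearMap.ker_eq_bot']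
    intro x' hx'
    have hmem : ((0, x') : (F × Q) × (F' × P)) ∈ Δ := by
      rw [← Submodule.Quotient.mk_eq_zero Δ, ← hjG'app]
      exact hx'
    obtain ⟨z, hz⟩ := hmem
    rw [hδapp, Prod.mk.injEq] at hz
    have h0 : z = 0 := hιinj (by rw [hz.1, map_zero])
    rw [← hz.2, h0, map_zero, map_zero]
  -- torsion-freeness
  have htfO : ∀ a : 𝒪, n • a = 0 → a = 0 := fun a ha => allowed_tf h𝒪 hn ha
  have htfR : ∀ r : (MonoidAlgebra 𝒪 Γ₀), n • r = 0 → r = 0 := by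
    intro r hr
    have hrr : n • r.coeff = 0 := by rw [← MonoidAlgebra.coeff_zero, ← hr]; rfl
    apply MonoidAlgebra.coeff_injective
    apply Finsupp.ext
    intro g
    have h1 : (n • r.coeff) g = n • (r.coeff g) :=
      map_nsmul (Finsupp.applyAddHom g) n _
    refine htfO _ ?_
    rw [← h1, hrr]
    exact Finsupp.zero_apply
  have htfG' : ∀ y : F' × P, n • y = 0 → y = 0 := by
    intro y hy
    obtain ⟨sec, hsec⟩ := Module.projective_def.mp
      (inferInstance : Module.Projective (MonoidAlgebra 𝒪 Γ₀) (F' × P))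
    have h2 : sec (n • y) = n • sec y := map_nsmul sec n y
    have h3 : n • sec y = 0 := by rw [← h2, hy, map_zero]
    have hz : sec y = 0 := by
      apply Finsupp.ext
      intro a
      have h1 : (n • sec y) a = n • ((sec y) a) := map_nsmul (Finsupp.applyAddHom a) n _
      refine htfR _ ?_
      rw [← h1, h3]
      exact Finsupp.zero_apply
    have h4 := hsec y
    rw [hz, map_zero] at h4
    exact h4.symm
  have hnIdinj : Function.Injective nId := by
    rw [← LinearMap.ker_eq_bot, LinearMap.ker_eq_bot']
    intro y hy
    exact htfG' y hy
  -- kernel of fA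
  have hkerfA : LinearMap.ker fA = LinearMap.range nId := by
    ext x'
    constructor
    · intro hx'
      have hmem : jG' x' ∈ S := by
        rw [← Submodule.Quotient.mk_eq_zero S]
        exact hx'
      obtain ⟨y', hy'⟩ := hmem
      have h1 : jG' (nId y') = jG' x' := hy'
      exact ⟨y', hjG'inj h1⟩
    · rintro ⟨y', rfl⟩
      refine LinearMap.mem_ker.mpr ?_
      have : jG' (nId y') ∈ S := ⟨y', rfl⟩
      rw [← Submodule.Quotient.mk_eq_zero S] at this
      exact this
  -- the map gA
  have hΔA : Δ ≤ LinearMap.ker (ρ.comp (LinearMap.fst (MonoidAlgebra 𝒪 Γ₀) (F × Q) (F' × P))) := by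
    rintro _ ⟨z, rfl⟩
    refine LinearMap.mem_ker.mpr ?_
    have hval : (ρ.comp (LinearMap.fst (MonoidAlgebra 𝒪 Γ₀) (F × Q) (F' × P))) (δ z) = π (i z.1) := by
      rw [hδapp]
      show ρ (ι z) = π (i z.1)
      rw [hρapp, hιapp]
    rw [hval]
    have hm : i z.1 ∈ LinearMap.ker π := hexact ▸ LinearMap.mem_range_self i z.1
    exact LinearMap.mem_ker.mp hm
  set ψ : (((F × Q) × (F' × P)) ⧸ Δ) →ₗ[(MonoidAlgebra 𝒪 Γ₀)] X :=
    Δ.liftQ (ρ.comp (LinearMap.fst (MonoidAlgebra 𝒪 Γ₀) (F × Q) (F' × P))) hΔA with hψ_def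
  have hψapp : ∀ w : (F × Q) × (F' × P), ψ (Submodule.Quotient.mk w) = π w.1.1 :=
    fun w => rfl
  have hSψ : S ≤ LinearMap.ker ψ := by
    rintro _ ⟨y', rfl⟩
    refine LinearMap.mem_ker.mpr ?_
    have h1 : (jG'.comp nId) y' = Submodule.Quotient.mk ((0 : F × Q), nId y') := rfl
    rw [h1, hψapp]
    exact map_zero π
  set gA : ((((F × Q) × (F' × P)) ⧸ Δ) ⧸ S) →ₗ[(MonoidAlgebra 𝒪 Γ₀)] X := S.liftQ ψ hSψ with hgA_def
  have hgAapp : ∀ w : (F × Q) × (F' × P),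
      gA (Submodule.Quotient.mk (Submodule.Quotient.mk w)) = π w.1.1 := fun w => rfl
  have hgAsurj : Function.Surjective gA := by
    intro x
    obtain ⟨f0, hf0⟩ := hπ x
    refine ⟨Submodule.Quotient.mk (Submodule.Quotient.mk ((f0, 0), 0)), ?_⟩
    rw [hgAapp]
    exact hf0
  -- the map gB
  have hΔB : Δ ≤ LinearMap.ker (ρ'.comp (LinearMap.snd (MonoidAlgebra 𝒪 Γ₀) (F × Q) (F' × P))) := by
    rintro _ ⟨z, rfl⟩
    refine LinearMap.mem_ker.mpr ?_
    have hval : (ρ'.comp (LinearMap.snd (MonoidAlgebra 𝒪 Γ₀) (F × Q) (F' × P))) (δ z) = π' (i' (φ z).1) := by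
      rw [hδapp]
      show ρ' (ι' (φ z)) = π' (i' (φ z).1)
      rw [hρ'app, hι'app]
    rw [hval]
    have hm : i' (φ z).1 ∈ LinearMap.ker π' := hexact' ▸ LinearMap.mem_range_self i' (φ z).1
    exact LinearMap.mem_ker.mp hm
  set ψB : (((F × Q) × (F' × P)) ⧸ Δ) →ₗ[(MonoidAlgebra 𝒪 Γ₀)] Y :=
    Δ.liftQ (ρ'.comp (LinearMap.snd (MonoidAlgebra 𝒪 Γ₀) (F × Q) (F' × P))) hΔB with hψB_def
  have hψBapp : ∀ w : (F × Q) × (F' × P), ψB (Submodule.Quotient.mk w) = π' w.2.1 :=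
    fun w => rfl
  have hρ'n : ∀ y' : F' × P, ρ' (n • y') = 0 := by
    intro y'
    have h1 : ρ' (n • y') = n • ρ' y' := map_nsmul ρ' n y'
    rw [h1]
    exact hnY _
  have hπ'n : ∀ y' : F' × P, π' ((n • y' : F' × P)).1 = 0 := by
    intro y'
    have := hρ'n y'
    rw [hρ'app] at this
    exact this
  have hSψB : S ≤ LinearMap.ker ψB := by
    rintro _ ⟨y', rfl⟩
    refine LinearMap.mem_ker.mpr ?_
    have h1 : (jG'.comp nId) y' = Submodule.Quotient.mk ((0 : F × Q), nId y') := rfl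
    rw [h1, hψBapp]
    exact hπ'n y'
  set gB : ((((F × Q) × (F' × P)) ⧸ Δ) ⧸ S) →ₗ[(MonoidAlgebra 𝒪 Γ₀)] Y := S.liftQ ψB hSψB with hgB_def
  have hgBapp : ∀ w : (F × Q) × (F' × P),
      gB (Submodule.Quotient.mk (Submodule.Quotient.mk w)) = π' w.2.1 := fun w => rfl
  have hgBsurj : Function.Surjective gB := by
    intro y
    obtain ⟨f0, hf0⟩ := hπ' y
    refine ⟨Submodule.Quotient.mk (Submodule.Quotient.mk (0, (f0, 0))), ?_⟩
    rw [hgBapp]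
    exact hf0
  -- kernel of gA is the image of G'
  have hkerψ : LinearMap.ker ψ = LinearMap.range jG' := by
    have hrc : LinearMap.range jG' = Submodule.map Δ.mkQ
        (LinearMap.range (LinearMap.inr (MonoidAlgebra 𝒪 Γ₀) (F × Q) (F' × P))) := by
      rw [hjG'_def, LinearMap.range_comp]
    rw [hψ_def, Submodule.ker_liftQ, hrc]
    apply le_antisymm
    · intro x hx
      obtain ⟨w, hw, rfl⟩ := Submodule.mem_map.mp hx
      have hw1 : π w.1.1 = 0 := LinearMap.mem_ker.mp hw
      have h1 : w.1.1 ∈ LinearMap.range i := by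
        rw [hexact]; exact LinearMap.mem_ker.mpr hw1
      obtain ⟨k, hk⟩ := h1
      have hιz : ι (k, w.1.2) = w.1 := by
        rw [hιapp]
        exact Prod.ext hk rfl
      have heq : Submodule.Quotient.mk (p := Δ) w =
          Submodule.Quotient.mk (LinearMap.inr (MonoidAlgebra 𝒪 Γ₀) (F × Q) (F' × P) (w.2 - ι' (φ (k, w.1.2)))) := by
        rw [LinearMap.inr_apply, Submodule.Quotient.eq]
        refine ⟨(k, w.1.2), ?_⟩
        rw [hδapp]
        have hsub : w - ((0 : F × Q), w.2 - ι' (φ (k, w.1.2))) =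
            (w.1 - 0, w.2 - (w.2 - ι' (φ (k, w.1.2)))) := rfl
        rw [hsub]
        refine Prod.ext ?_ ?_
        · show ι (k, w.1.2) = w.1 - 0
          rw [sub_zero]; exact hιz
        · show ι' (φ (k, w.1.2)) = w.2 - (w.2 - ι' (φ (k, w.1.2)))
          rw [sub_sub_cancel]
      refine Submodule.mem_map.mpr ⟨_, LinearMap.mem_range_self
        (LinearMap.inr (MonoidAlgebra 𝒪 Γ₀) (F × Q) (F' × P)) (w.2 - ι' (φ (k, w.1.2))), ?_⟩
      rw [Submodule.mkQ_apply]
      exact heq.symm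
    · intro x hx
      obtain ⟨v0, hv0, rfl⟩ := Submodule.mem_map.mp hx
      obtain ⟨v, rfl⟩ := hv0
      refine Submodule.mem_map.mpr ⟨LinearMap.inr (MonoidAlgebra 𝒪 Γ₀) (F × Q) (F' × P) v, ?_, rfl⟩
      refine LinearMap.mem_ker.mpr ?_
      show π ((LinearMap.inr (MonoidAlgebra 𝒪 Γ₀) (F × Q) (F' × P) v).1.1) = 0
      rw [LinearMap.inr_apply]
      exact map_zero π
  have hkergA : LinearMap.ker gA = LinearMap.range fA := by
    rw [hgA_def, Submodule.ker_liftQ, hkerψ, hfA_def, LinearMap.range_comp,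
      LinearMap.range_comp, LinearMap.range_comp]
  -- kernel of gB is the image of G
  have hkerψB : LinearMap.ker ψB = LinearMap.range jG := by
    have hrc : LinearMap.range jG = Submodule.map Δ.mkQ
        (LinearMap.range (LinearMap.inl (MonoidAlgebra 𝒪 Γ₀) (F × Q) (F' × P))) := by
      rw [hjG_def, LinearMap.range_comp]
    rw [hψB_def, Submodule.ker_liftQ, hrc]
    apply le_antisymm
    · intro x hx
      obtain ⟨w, hw, rfl⟩ := Submodule.mem_map.mp hx
      have hw1 : π' w.2.1 = 0 := LinearMap.mem_ker.mp hw
      have h1 : w.2.1 ∈ LinearMap.range i' := by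
        rw [hexact']; exact LinearMap.mem_ker.mpr hw1
      obtain ⟨k', hk'⟩ := h1
      have hι'w : ι' (k', w.2.2) = w.2 := by
        rw [hι'app]
        exact Prod.ext hk' rfl
      have hφz : φ (φ.symm (k', w.2.2)) = (k', w.2.2) := φ.apply_symm_apply _
      have heq : Submodule.Quotient.mk (p := Δ) w =
          Submodule.Quotient.mk (LinearMap.inl (MonoidAlgebra 𝒪 Γ₀) (F × Q) (F' × P)
            (w.1 - ι (φ.symm (k', w.2.2)))) := by
        rw [LinearMap.inl_apply, Submodule.Quotient.eq]
        refine ⟨φ.symm (k', w.2.2), ?_⟩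
        rw [hδapp]
        have hsub : w - ((w.1 - ι (φ.symm (k', w.2.2))), (0 : F' × P)) =
            (w.1 - (w.1 - ι (φ.symm (k', w.2.2))), w.2 - 0) := rfl
        rw [hsub]
        refine Prod.ext ?_ ?_
        · show ι (φ.symm (k', w.2.2)) = w.1 - (w.1 - ι (φ.symm (k', w.2.2)))
          rw [sub_sub_cancel]
        · show ι' (φ (φ.symm (k', w.2.2))) = w.2 - 0
          rw [sub_zero, hφz]
          exact hι'w
      refine Submodule.mem_map.mpr ⟨_, LinearMap.mem_range_self
        (LinearMap.inl (MonoidAlgebra 𝒪 Γ₀) (F × Q) (F' × P)) (w.1 - ι (φ.symm (k', w.2.2))), ?_⟩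
      rw [Submodule.mkQ_apply]
      exact heq.symm
    · intro x hx
      obtain ⟨v0, hv0, rfl⟩ := Submodule.mem_map.mp hx
      obtain ⟨v, rfl⟩ := hv0
      refine Submodule.mem_map.mpr ⟨LinearMap.inl (MonoidAlgebra 𝒪 Γ₀) (F × Q) (F' × P) v, ?_, rfl⟩
      refine LinearMap.mem_ker.mpr ?_
      show π' ((LinearMap.inl (MonoidAlgebra 𝒪 Γ₀) (F × Q) (F' × P) v).2.1) = 0
      rw [LinearMap.inl_apply]
      exact map_zero π'
  have hkergB : LinearMap.ker gB = LinearMap.range fB := by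
    rw [hgB_def, Submodule.ker_liftQ, hkerψB, hfB_def, LinearMap.range_comp,
      LinearMap.range_comp, LinearMap.range_comp]
  -- PdLeOne for M'A
  have hpdA : PdLeOne (MonoidAlgebra 𝒪 Γ₀) ↥(LinearMap.range fA) := by
    refine pdLeOne_of_surj fA.rangeRestrict (LinearMap.surjective_rangeRestrict fA)
      inferInstance ?_
    have h1 : LinearMap.ker fA.rangeRestrict = LinearMap.range nId := by
      rw [LinearMap.ker_rangeRestrict, hkerfA]
    rw [h1]
    exact Module.Projective.of_equiv (LinearEquiv.ofInjective nId hnIdinj)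
  -- PdLeOne for M'B
  have hmemb : ∀ y' : F' × P, nId y' ∈ LinearMap.range ι' := by
    intro y'
    rw [hrangeι']
    refine LinearMap.mem_ker.mpr ?_
    rw [hnIdapp]
    exact hρ'n y'
  set eι' : (K' × P) ≃ₗ[(MonoidAlgebra 𝒪 Γ₀)] ↥(LinearMap.range ι') := LinearEquiv.ofInjective ι' hι'inj
    with heι'_def
  have heι'val : ∀ w : K' × P, ((eι' w : ↥(LinearMap.range ι')) : F' × P) = ι' w := by
    intro w
    rw [heι'_def]
    exact LinearEquiv.ofInjective_apply ι' (h := hι'inj) w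
  set cod : (F' × P) →ₗ[(MonoidAlgebra 𝒪 Γ₀)] ↥(LinearMap.range ι') :=
    LinearMap.codRestrict (LinearMap.range ι') nId hmemb with hcod_def
  have hcodval : ∀ y' : F' × P, ((cod y' : ↥(LinearMap.range ι')) : F' × P) = nId y' := by
    intro y'
    rw [hcod_def]
    exact LinearMap.codRestrict_apply (LinearMap.range ι') nId (h := hmemb) y'
  set β : (F' × P) →ₗ[(MonoidAlgebra 𝒪 Γ₀)] (F × Q) :=
    ι.comp ((φ.symm.toLinearMap).comp ((eι'.symm.toLinearMap).comp cod)) with hβ_def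
  have hβapply : ∀ y' : F' × P, β y' = ι (φ.symm (eι'.symm (cod y'))) := fun _ => rfl
  have hβinj : Function.Injective β := by
    rw [← LinearMap.ker_eq_bot, LinearMap.ker_eq_bot']
    intro y' hy'
    have h0 : ι (φ.symm (eι'.symm (cod y'))) = ι 0 := by
      rw [map_zero, ← hβapply y']
      exact hy'
    have h1 := hιinj h0
    have h2 : eι'.symm (cod y') = 0 := φ.symm.injective (by rw [map_zero]; exact h1)
    have h3 : cod y' = 0 := eι'.symm.injective (by rw [map_zero]; exact h2)
    have h4 : nId y' = 0 := by
      rw [← hcodval y', h3]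
      exact ZeroMemClass.coe_zero _
    refine htfG' y' ?_
    rw [← hnIdapp]
    exact h4
  have hkerfB : LinearMap.ker fB = LinearMap.range β := by
    ext x
    constructor
    · intro hx
      have hmem : jG x ∈ S := by
        rw [← Submodule.Quotient.mk_eq_zero S]
        exact hx
      obtain ⟨y', hy'⟩ := hmem
      have h1 : Submodule.Quotient.mk (p := Δ) ((0 : F × Q), nId y') =
          Submodule.Quotient.mk (x, (0 : F' × P)) := by
        rw [← hjG'app, ← hjGapp]
        exact hy'
      rw [Submodule.Quotient.eq] at h1
      obtain ⟨z, hz⟩ := h1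
      have hsub : ((0 : F × Q), nId y') - (x, (0 : F' × P)) = (0 - x, nId y' - 0) := rfl
      rw [hsub, hδapp, Prod.mk.injEq] at hz
      have hx1 : ι (-z) = x := by
        rw [map_neg, hz.1, zero_sub, neg_neg]
      have hy2 : ι' (φ (-z)) = nId (-y') := by
        rw [map_neg φ z, map_neg ι' (φ z), hz.2, sub_zero, ← map_neg nId y']
      have hc : cod (-y') = eι' (φ (-z)) := by
        apply Subtype.ext
        rw [hcodval, heι'val, hy2]
      refine ⟨-y', ?_⟩
      rw [hβapply, hc, eι'.symm_apply_apply, φ.symm_apply_apply]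
      exact hx1
    · rintro ⟨y', rfl⟩
      refine LinearMap.mem_ker.mpr ?_
      have hβy : β y' = ι (φ.symm (eι'.symm (cod y'))) := hβapply y'
      have hval : ι' (φ (φ.symm (eι'.symm (cod y')))) = nId y' := by
        rw [φ.apply_symm_apply, ← heι'val, eι'.apply_symm_apply, hcodval]
      have hsum : jG (ι (φ.symm (eι'.symm (cod y')))) + jG' (nId y') = 0 := by
        rw [hjGapp, hjG'app, ← Submodule.Quotient.mk_add, Prod.mk_add_mk, add_zero, zero_add,
          Submodule.Quotient.mk_eq_zero]
        exact ⟨φ.symm (eι'.symm (cod y')), by rw [hδapp, hval]⟩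
      have hmemS : jG (β y') ∈ S := by
        refine ⟨-y', ?_⟩
        show jG' (nId (-y')) = jG (β y')
        rw [map_neg nId, map_neg jG', hβy]
        exact (eq_neg_of_add_eq_zero_left hsum).symm
      rw [← Submodule.Quotient.mk_eq_zero S] at hmemS
      exact hmemS
  have hpdB : PdLeOne (MonoidAlgebra 𝒪 Γ₀) ↥(LinearMap.range fB) := by
    refine pdLeOne_of_surj fB.rangeRestrict (LinearMap.surjective_rangeRestrict fB)
      inferInstance ?_
    have h1 : LinearMap.ker fB.rangeRestrict = LinearMap.range β := by
      rw [LinearMap.ker_rangeRestrict, hkerfB]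
    rw [h1]
    exact Module.Projective.of_equiv (LinearEquiv.ofInjective β hβinj)
  -- finiteness
  haveI : Module.Finite (MonoidAlgebra 𝒪 Γ₀) (F' × P) := inferInstance
  haveI hTfinmod : Module.Finite (MonoidAlgebra 𝒪 Γ₀) ((F' × P) ⧸ (LinearMap.range nId)) :=
    Module.Finite.of_surjective (LinearMap.range nId).mkQ (Submodule.mkQ_surjective _)
  letI : Module 𝒪 ((F' × P) ⧸ (LinearMap.range nId)) :=
    Module.compHom _ (algebraMap 𝒪 (MonoidAlgebra 𝒪 Γ₀))
  letI : IsScalarTower 𝒪 (MonoidAlgebra 𝒪 Γ₀) ((F' × P) ⧸ (LinearMap.range nId)) :=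
    ⟨fun a r t => by
      have h1 : (a • r) = algebraMap 𝒪 (MonoidAlgebra 𝒪 Γ₀) a * r := Algebra.smul_def a r
      rw [h1, mul_smul]
      rfl⟩
  haveI : Module.Finite 𝒪 (MonoidAlgebra 𝒪 Γ₀) := Module.Finite.equiv
    ((Finsupp.linearEquivFunOnFinite 𝒪 𝒪 Γ₀).symm.trans (MonoidAlgebra.coeffLinearEquiv 𝒪).symm : (Γ₀ → 𝒪) ≃ₗ[𝒪] MonoidAlgebra 𝒪 Γ₀)
  haveI : Module.Finite 𝒪 ((F' × P) ⧸ (LinearMap.range nId)) :=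
    Module.Finite.trans (MonoidAlgebra 𝒪 Γ₀) ((F' × P) ⧸ (LinearMap.range nId))
  have htorT : ∀ t : ((F' × P) ⧸ (LinearMap.range nId)), n • t = 0 := by
    intro t
    obtain ⟨y, rfl⟩ := Submodule.mkQ_surjective _ t
    have h1 : (LinearMap.range nId).mkQ (n • y) = n • (LinearMap.range nId).mkQ y :=
      map_nsmul _ n y
    rw [← h1, Submodule.mkQ_apply, Submodule.Quotient.mk_eq_zero]
    exact ⟨y, hnIdapp y⟩
  haveI hTfin : Finite ((F' × P) ⧸ (LinearMap.range nId)) :=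
    allowed_finite_module h𝒪 n hn _ htorT
  have hfinA : Finite ↥(LinearMap.range fA) := by
    have e1 : ((F' × P) ⧸ (LinearMap.range nId)) ≃ₗ[(MonoidAlgebra 𝒪 Γ₀)] ((F' × P) ⧸ LinearMap.ker fA) :=
      Submodule.quotEquivOfEq _ _ hkerfA.symm
    exact Finite.of_equiv _ (e1.trans fA.quotKerEquivRange).toEquiv
  have hfinQA : Finite (((((F × Q) × (F' × P)) ⧸ Δ) ⧸ S) ⧸ LinearMap.range fA) := by
    have e2 : (((((F × Q) × (F' × P)) ⧸ Δ) ⧸ S) ⧸ (LinearMap.range fA)) ≃ₗ[(MonoidAlgebra 𝒪 Γ₀)] X :=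
      (Submodule.quotEquivOfEq _ _ hkergA.symm).trans (gA.quotKerEquivOfSurjective hgAsurj)
    exact Finite.of_equiv X e2.symm.toEquiv
  have hMfin : Finite ((((F × Q) × (F' × P)) ⧸ Δ) ⧸ S) :=
    finite_of_sub_quot (LinearMap.range fA) hfinA hfinQA
  -- assembly
  haveI : Subsingleton (((((F × Q) × (F' × P)) ⧸ Δ) ⧸ S) ⧸
      (⊤ : Submodule (MonoidAlgebra 𝒪 Γ₀) ((((F × Q) × (F' × P)) ⧸ Δ) ⧸ S))) :=
    Submodule.Quotient.subsingleton_iff.mpr rfl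
  exact ⟨((((F × Q) × (F' × P)) ⧸ Δ) ⧸ S), inferInstance, inferInstance,
    ((((F × Q) × (F' × P)) ⧸ Δ) ⧸ S), inferInstance, inferInstance, hMfin, hMfin,
    ⟨LinearEquiv.refl (MonoidAlgebra 𝒪 Γ₀) _⟩, LinearMap.range fA, ⊤, LinearMap.range fB, ⊤, le_top, le_top,
    hpdA, hpdB, pdLeOne_of_subsingleton _, pdLeOne_of_subsingleton _,
    topQuotEquiv gA hgAsurj _ hkergA, topQuotEquiv gB hgBsurj _ hkergB⟩
end

section
/- Define the left ℤ[D]-module W = {(x, y) ∈ ΔD × ℤ[D/I] : π(x) = (1 − φ^{-1})·y}. Then the map f : W → ℤ[D] given by f(x, y) = x + ν_I ⋆ y is an injective homomorphism of left ℤ[D]-modules, and the projection π induces an isomorphism ℤ[D]/f(W) ≅ ℤ[D/I]/(g_φ); that is, there is a short exact sequence of left ℤ[D]-modules 0 → W → ℤ[D] → ℤ[D/I]/(g_φ) → 0. -/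
set_option linter.unusedSectionVars false
open MonoidAlgebra


/-- The norm element `ν_I = Σ_{g ∈ I} g` of the integral group ring `ℤ[D]`. -/
noncomputable def nuI (D : Type) [Group D] [Fintype D] (I : Subgroup D)
    [DecidablePred (· ∈ I)] : MonoidAlgebra ℤ D :=
  ∑ g : I, MonoidAlgebra.of ℤ D (g : D)

/-- A set-theoretic lift `ℤ[D/I] → ℤ[D]` of the natural projection,
obtained by choosing a representative of each coset. -/
noncomputable def hatLift (D : Type) [Group D] (I : Subgroup D) [I.Normal]
    (y : MonoidAlgebra ℤ (D ⧸ I)) : MonoidAlgebra ℤ D :=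
  MonoidAlgebra.mapDomain Quotient.out y

noncomputable def augD (G : Type) [Group G] : MonoidAlgebra ℤ G →ₐ[ℤ] ℤ :=
  MonoidAlgebra.lift ℤ ℤ G 1

lemma augD_single (G : Type) [Group G] (d : G) (r : ℤ) : augD G (single d r) = r := by
  rw [augD, MonoidAlgebra.lift_single]; simp

section Aux
variable (D : Type) [Group D] [Fintype D] (I : Subgroup D) [I.Normal]
    [DecidablePred (· ∈ I)]

noncomputable def piDI : MonoidAlgebra ℤ D →+* MonoidAlgebra ℤ (D ⧸ I) :=
  MonoidAlgebra.mapDomainRingHom ℤ (QuotientGroup.mk' I)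

lemma pi_single (d : D) (r : ℤ) :
    piDI D I (single d r) = single (↑d : D ⧸ I) r := by
  simp [piDI, MonoidAlgebra.mapDomainRingHom_apply, Finsupp.mapDomain_single]

lemma hatLift_single (q : D ⧸ I) (r : ℤ) :
    hatLift D I (single q r) = single q.out r :=
  MonoidAlgebra.mapDomain_single

lemma hatLift_add (y y' : MonoidAlgebra ℤ (D ⧸ I)) :
    hatLift D I (y + y') = hatLift D I y + hatLift D I y' :=
  MonoidAlgebra.mapDomain_add _ _ _

lemma hatLift_sub (y y' : MonoidAlgebra ℤ (D ⧸ I)) :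
    hatLift D I (y - y') = hatLift D I y - hatLift D I y' :=
  MonoidAlgebra.coeff_injective (by
    simp [hatLift, MonoidAlgebra.mapDomain, MonoidAlgebra.coeff_sub, Finsupp.mapDomain_sub])

lemma hatLift_zero : hatLift D I 0 = 0 := MonoidAlgebra.mapDomain_zero _

lemma pi_hatLift (y : MonoidAlgebra ℤ (D ⧸ I)) : piDI D I (hatLift D I y) = y := by
  induction y using MonoidAlgebra.induction_linear with
  | zero => simp [hatLift_zero, map_zero]
  | add a b ha hb => rw [hatLift_add, map_add, ha, hb]
  | single q r => rw [hatLift_single, pi_single]; congr 1; exact Quotient.out_eq' q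

lemma nuI_mul_single (d : D) (r : ℤ) :
    nuI D I * single d r = ∑ g : I, single ((g : D) * d) r := by
  rw [nuI, Finset.sum_mul]
  refine Finset.sum_congr rfl fun g _ => ?_
  rw [MonoidAlgebra.of_apply, MonoidAlgebra.single_mul_single, one_mul]

lemma nuI_mul_single_congr {d d' : D} (h : (↑d : D ⧸ I) = ↑d') (r : ℤ) :
    nuI D I * single d r = nuI D I * single d' r := by
  rw [nuI_mul_single, nuI_mul_single]
  have hmem : d' * d⁻¹ ∈ I := by
    have h1 : d⁻¹ * d' ∈ I := (QuotientGroup.eq).1 h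
    have := Subgroup.Normal.conj_mem ‹I.Normal› _ h1 d
    simpa [mul_assoc] using this
  refine (Fintype.sum_equiv (Equiv.mulRight (⟨d' * d⁻¹, hmem⟩ : I))
    (fun g => single ((g : D) * d') r) (fun g => single ((g : D) * d) r) fun g => ?_).symm
  show single ((g : D) * d') r = single (((g * ⟨d' * d⁻¹, hmem⟩ : I) : D) * d) r
  congr 1
  push_cast
  group

lemma nuI_eq_hatLift_pi (c : MonoidAlgebra ℤ D) :
    nuI D I * c = nuI D I * hatLift D I (piDI D I c) := by
  induction c using MonoidAlgebra.induction_linear with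
  | zero => simp [hatLift_zero, map_zero]
  | add a b ha hb => rw [map_add, hatLift_add, mul_add, mul_add, ha, hb]
  | single d r =>
    rw [pi_single, hatLift_single]
    exact nuI_mul_single_congr D I (by symm; exact Quotient.out_eq' (↑d : D ⧸ I)) r

lemma nuI_mul_apply (c : MonoidAlgebra ℤ D) (a : D) :
    (nuI D I * c).coeff a = ∑ g : I, c.coeff ((g : D)⁻¹ * a) := by
  rw [nuI, Finset.sum_mul, MonoidAlgebra.coeff_sum, Finsupp.finset_sum_apply]
  refine Finset.sum_congr rfl fun g _ => ?_
  rw [MonoidAlgebra.of_apply, MonoidAlgebra.single_mul_apply, one_mul]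

lemma mul_nuI_apply (c : MonoidAlgebra ℤ D) (a : D) :
    (c * nuI D I).coeff a = ∑ g : I, c.coeff (a * (g : D)⁻¹) := by
  rw [nuI, Finset.mul_sum, MonoidAlgebra.coeff_sum, Finsupp.finset_sum_apply]
  refine Finset.sum_congr rfl fun g _ => ?_
  rw [MonoidAlgebra.of_apply, MonoidAlgebra.mul_single_apply, mul_one]

def conjEquiv (a : D) : I ≃ I where
  toFun g := ⟨a⁻¹ * g * a, by simpa using Subgroup.Normal.conj_mem ‹I.Normal› _ g.2 a⁻¹⟩
  invFun g := ⟨a * g * a⁻¹, Subgroup.Normal.conj_mem ‹I.Normal› _ g.2 a⟩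
  left_inv g := Subtype.ext (by group)
  right_inv g := Subtype.ext (by group)

lemma nuI_central (c : MonoidAlgebra ℤ D) : nuI D I * c = c * nuI D I := by
  ext a
  rw [nuI_mul_apply, mul_nuI_apply]
  refine Fintype.sum_equiv (conjEquiv D I a) _ _ fun g => ?_
  show c.coeff ((g : D)⁻¹ * a) = c.coeff (a * (a⁻¹ * (g:D) * a)⁻¹)
  congr 1
  group

lemma pi_nuI : piDI D I (nuI D I) = (Nat.card I : MonoidAlgebra ℤ (D ⧸ I)) := by
  rw [nuI, map_sum]
  have h1 : ∀ g : I, piDI D I (MonoidAlgebra.of ℤ D (g : D)) = 1 := fun g => by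
    rw [MonoidAlgebra.of_apply, pi_single, MonoidAlgebra.one_def]
    congr 1
    exact (QuotientGroup.eq_one_iff _).2 g.2
  rw [Finset.sum_congr rfl fun g _ => h1 g, Finset.sum_const, Finset.card_univ,
    nsmul_eq_mul, mul_one, Nat.card_eq_fintype_card]

lemma aug_pi (z : MonoidAlgebra ℤ D) :
    augD D z = augD (D ⧸ I) (piDI D I z) := by
  induction z using MonoidAlgebra.induction_linear with
  | zero => simp
  | add a b ha hb => rw [map_add, map_add, map_add, ha, hb]
  | single d r => rw [pi_single, augD_single, augD_single]

lemma aug_hatLift (y : MonoidAlgebra ℤ (D ⧸ I)) :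
    augD D (hatLift D I y) = augD (D ⧸ I) y := by
  induction y using MonoidAlgebra.induction_linear with
  | zero => simp [hatLift_zero]
  | add a b ha hb => rw [hatLift_add, map_add, map_add, ha, hb]
  | single q r => rw [hatLift_single, augD_single, augD_single]

lemma aug_nuI : augD D (nuI D I) = (Nat.card I : ℤ) := by
  rw [nuI, map_sum]
  have h1 : ∀ g : I, augD D (MonoidAlgebra.of ℤ D (g : D)) = 1 := fun g => by
    rw [MonoidAlgebra.of_apply, augD_single]
  rw [Finset.sum_congr rfl fun g _ => h1 g, Finset.sum_const, Finset.card_univ,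
    nsmul_eq_mul, mul_one, Nat.card_eq_fintype_card]

end Aux

lemma of_comm (G : Type) [Group G] (φ : G) (hφ : ∀ x : G, x ∈ Subgroup.zpowers φ)
    (b : G) (hb : b ∈ Subgroup.zpowers φ) (u : MonoidAlgebra ℤ G) :
    MonoidAlgebra.of ℤ G b * u = u * MonoidAlgebra.of ℤ G b := by
  ext a
  rw [MonoidAlgebra.of_apply, MonoidAlgebra.single_mul_apply, MonoidAlgebra.mul_single_apply,
    one_mul, mul_one]
  congr 1
  obtain ⟨k, rfl⟩ := hb
  obtain ⟨j, rfl⟩ := hφ a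
  rw [← zpow_neg, ← zpow_add, ← zpow_add, add_comm]

lemma gphi_nzd (G : Type) [Finite G] [Group G] (φ : G) (m : ℕ) (hm : 1 ≤ m)
    (y : MonoidAlgebra ℤ G)
    (h : (1 - MonoidAlgebra.of ℤ G φ⁻¹ + (m : MonoidAlgebra ℤ G)) * y = 0) :
    y = 0 := by
  have hmul : MonoidAlgebra.of ℤ G φ⁻¹ * y = MonoidAlgebra.single (1 : G) (1 + (m:ℤ)) * y := by
    have h1 : y - MonoidAlgebra.of ℤ G φ⁻¹ * y + (m : MonoidAlgebra ℤ G) * y = 0 := by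
      have := h
      rw [add_mul, sub_mul, one_mul] at this
      exact this
    have h2 : MonoidAlgebra.single (1 : G) (1 + (m:ℤ))
        = 1 + (m : MonoidAlgebra ℤ G) := by
      rw [MonoidAlgebra.single_add, MonoidAlgebra.natCast_def, MonoidAlgebra.one_def]
    rw [h2, add_mul, one_mul]
    rw [sub_add_eq_add_sub, sub_eq_zero] at h1
    exact h1.symm
  have key : ∀ a : G, y.coeff (φ * a) = (1 + (m:ℤ)) * y.coeff a := by
    intro a
    have : (MonoidAlgebra.of ℤ G φ⁻¹ * y).coeff a = (MonoidAlgebra.single (1 : G) (1 + (m:ℤ)) * y).coeff a := by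
      rw [hmul]
    rwa [MonoidAlgebra.of_apply, MonoidAlgebra.single_mul_apply,
      MonoidAlgebra.single_mul_apply, inv_inv, one_mul, inv_one, one_mul] at this
  have keypow : ∀ k : ℕ, ∀ a : G, y.coeff (φ ^ k * a) = (1 + (m:ℤ)) ^ k * y.coeff a := by
    intro k
    induction k with
    | zero => intro a; simp
    | succ n ih =>
      intro a
      have : φ ^ (n + 1) * a = φ ^ n * (φ * a) := by rw [pow_succ, mul_assoc]
      rw [this, ih (φ * a), key a, pow_succ]
      ring
  ext a
  have hn : φ ^ orderOf φ = 1 := pow_orderOf_eq_one φ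
  have hnpos : orderOf φ ≠ 0 := (orderOf_pos φ).ne'
  have h1 : y.coeff a = (1 + (m:ℤ)) ^ orderOf φ * y.coeff a := by
    conv_lhs => rw [← one_mul a, ← hn, keypow]
  have hgt : (1:ℤ) < (1 + (m:ℤ)) ^ orderOf φ := by
    refine one_lt_pow₀ ?_ hnpos
    have : (1:ℤ) ≤ (m:ℤ) := by exact_mod_cast hm
    linarith
  have h2 : ((1 + (m:ℤ)) ^ orderOf φ - 1) * y.coeff a = 0 := by linarith [h1]
  have h3 : y.coeff a = 0 := by
    rcases mul_eq_zero.1 h2 with h | h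
    · exfalso; linarith
    · exact h
  simpa using h3

/-- The short exact sequence `0 → W → ℤ[D] → ℤ[D/I]/(g_φ) → 0` of left
`ℤ[D]`-modules, where `W = {(x,y) ∈ ΔD × ℤ[D/I] : π(x) = (1 − φ⁻¹)·y}` and
`f(x,y) = x + ν_I ⋆ y`:  `W` is a `ℤ[D]`-submodule of `ℤ[D] × ℤ[D/I]`
(the latter a `ℤ[D]`-module via `π`), the map `f` is injective and
`ℤ[D]`-linear on `W`, the composite `ℤ[D] → ℤ[D/I] → ℤ[D/I]/(g_φ)` is
surjective, and its kernel is exactly `f(W)`. -/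
theorem groupRing_exact_sequence
    (D : Type) [Group D] [Fintype D] (I : Subgroup D) [I.Normal]
    [DecidablePred (· ∈ I)]
    (φ : D ⧸ I) (hφ : ∀ x : D ⧸ I, x ∈ Subgroup.zpowers φ) :
    letI aug : MonoidAlgebra ℤ D →ₐ[ℤ] ℤ := MonoidAlgebra.lift ℤ ℤ D 1
    letI π : MonoidAlgebra ℤ D →+* MonoidAlgebra ℤ (D ⧸ I) :=
      MonoidAlgebra.mapDomainRingHom ℤ (QuotientGroup.mk' I)
    letI gφ : MonoidAlgebra ℤ (D ⧸ I) :=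
      1 - MonoidAlgebra.of ℤ (D ⧸ I) φ⁻¹ + (Nat.card I : MonoidAlgebra ℤ (D ⧸ I))
    letI W : Set (MonoidAlgebra ℤ D × MonoidAlgebra ℤ (D ⧸ I)) :=
      {w | aug w.1 = 0 ∧ π w.1 = (1 - MonoidAlgebra.of ℤ (D ⧸ I) φ⁻¹) * w.2}
    letI f : MonoidAlgebra ℤ D × MonoidAlgebra ℤ (D ⧸ I) → MonoidAlgebra ℤ D :=
      fun w => w.1 + nuI D I * hatLift D I w.2
    -- `W` is a left `ℤ[D]`-submodule of `ℤ[D] × ℤ[D/I]`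
    ((0, 0) ∈ W ∧
     (∀ w ∈ W, ∀ w' ∈ W, w + w' ∈ W) ∧
     (∀ (r : MonoidAlgebra ℤ D), ∀ w ∈ W, (r * w.1, π r * w.2) ∈ W)) ∧
    -- `f` is an injective homomorphism of left `ℤ[D]`-modules on `W`
    (∀ w ∈ W, ∀ w' ∈ W, f (w + w') = f w + f w') ∧
    (∀ (r : MonoidAlgebra ℤ D), ∀ w ∈ W, f (r * w.1, π r * w.2) = r * f w) ∧
    (∀ w ∈ W, ∀ w' ∈ W, f w = f w' → w = w') ∧
    -- the composite `ℤ[D] → ℤ[D/I]/(g_φ)` is surjective with kernel `f(W)`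
    Function.Surjective
      (fun x : MonoidAlgebra ℤ D =>
        (Ideal.span {gφ} : Ideal (MonoidAlgebra ℤ (D ⧸ I))).mkQ (π x)) ∧
    (∀ z : MonoidAlgebra ℤ D,
      (Ideal.span {gφ} : Ideal (MonoidAlgebra ℤ (D ⧸ I))).mkQ (π z) = 0 ↔
        ∃ w ∈ W, f w = z) := by
  letI : Finite (D ⧸ I) := Quotient.finite _
  have hqcomm : ∀ u : MonoidAlgebra ℤ (D ⧸ I),
      (1 - MonoidAlgebra.of ℤ (D ⧸ I) φ⁻¹) * u = u * (1 - MonoidAlgebra.of ℤ (D ⧸ I) φ⁻¹) :=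
    fun u => by
      rw [sub_mul, mul_sub, one_mul, mul_one, of_comm (D ⧸ I) φ hφ φ⁻¹ (hφ φ⁻¹) u]
  refine ⟨⟨?_, ?_, ?_⟩, ?_, ?_, ?_, ?_, ?_⟩
  · -- (0,0) ∈ W
    exact ⟨map_zero _, by simp⟩
  · -- closed under addition
    rintro w ⟨hw1, hw2⟩ w' ⟨hw'1, hw'2⟩
    refine ⟨?_, ?_⟩
    · show augD D (w + w').1 = 0
      rw [show (w + w').1 = w.1 + w'.1 from rfl, map_add,
        show augD D w.1 = 0 from hw1, show augD D w'.1 = 0 from hw'1, add_zero]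
    · show piDI D I (w + w').1 = (1 - MonoidAlgebra.of ℤ (D ⧸ I) φ⁻¹) * (w + w').2
      rw [show (w + w').1 = w.1 + w'.1 from rfl, show (w + w').2 = w.2 + w'.2 from rfl, map_add,
        show piDI D I w.1 = _ from hw2, show piDI D I w'.1 = _ from hw'2, mul_add]
  · -- closed under scalar multiplication
    rintro r w ⟨hw1, hw2⟩
    refine ⟨?_, ?_⟩
    · show augD D (r * w.1) = 0
      rw [map_mul, show augD D w.1 = 0 from hw1, mul_zero]
    · show piDI D I (r * w.1)
        = (1 - MonoidAlgebra.of ℤ (D ⧸ I) φ⁻¹) * (piDI D I r * w.2)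
      rw [map_mul, show piDI D I w.1 = _ from hw2, ← mul_assoc, ← mul_assoc,
        ← hqcomm (piDI D I r)]
  · -- f additive
    intro w _ w' _
    show (w + w').1 + nuI D I * hatLift D I (w + w').2
      = (w.1 + nuI D I * hatLift D I w.2) + (w'.1 + nuI D I * hatLift D I w'.2)
    rw [show (w + w').1 = w.1 + w'.1 from rfl, show (w + w').2 = w.2 + w'.2 from rfl,
      hatLift_add, mul_add]
    abel
  · -- f linear
    rintro r w ⟨hw1, hw2⟩
    show r * w.1 + nuI D I * hatLift D I (piDI D I r * w.2)
      = r * (w.1 + nuI D I * hatLift D I w.2)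
    have h1 : piDI D I (r * hatLift D I w.2) = piDI D I r * w.2 := by
      rw [map_mul, pi_hatLift]
    have h2 : nuI D I * hatLift D I (piDI D I r * w.2)
        = r * (nuI D I * hatLift D I w.2) := by
      rw [← h1, ← nuI_eq_hatLift_pi, nuI_central, mul_assoc, ← nuI_central]
    rw [h2, mul_add]
  · -- f injective on W
    rintro w ⟨hw1, hw2⟩ w' ⟨hw'1, hw'2⟩ heq
    have h0 : w.1 + nuI D I * hatLift D I w.2 = w'.1 + nuI D I * hatLift D I w'.2 := heq
    have hx : (w.1 - w'.1) + nuI D I * hatLift D I (w.2 - w'.2) = 0 := by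
      rw [hatLift_sub, mul_sub, sub_add_sub_comm, h0, sub_self]
    have hπ0 : (1 - MonoidAlgebra.of ℤ (D ⧸ I) φ⁻¹
        + (Nat.card I : MonoidAlgebra ℤ (D ⧸ I))) * (w.2 - w'.2) = 0 := by
      have h3 : piDI D I ((w.1 - w'.1) + nuI D I * hatLift D I (w.2 - w'.2)) = 0 := by
        rw [hx, map_zero]
      rw [map_add, map_mul, pi_nuI, pi_hatLift, map_sub,
        show piDI D I w.1 = _ from hw2, show piDI D I w'.1 = _ from hw'2, ← mul_sub] at h3
      rw [add_mul]
      exact h3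
    have hy : w.2 - w'.2 = 0 :=
      gphi_nzd (D ⧸ I) φ (Nat.card I) Nat.card_pos (w.2 - w'.2) hπ0
    have hx1 : w.1 = w'.1 := by
      rw [hy, hatLift_zero, mul_zero, add_zero, sub_eq_zero] at hx
      exact hx
    have hx2 : w.2 = w'.2 := by rwa [sub_eq_zero] at hy
    exact Prod.ext hx1 hx2
  · -- surjectivity
    intro q
    obtain ⟨v, rfl⟩ := Submodule.Quotient.mk_surjective _ q
    refine ⟨hatLift D I v, ?_⟩
    show (Ideal.span _ : Ideal (MonoidAlgebra ℤ (D ⧸ I))).mkQ (piDI D I (hatLift D I v)) = _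
    rw [pi_hatLift, Submodule.mkQ_apply]
  · -- kernel description
    intro z
    constructor
    · intro h
      have hmem : piDI D I z ∈ Ideal.span {(1 - MonoidAlgebra.of ℤ (D ⧸ I) φ⁻¹
          + (Nat.card I : MonoidAlgebra ℤ (D ⧸ I)))} := by
        rwa [← Submodule.Quotient.mk_eq_zero, ← Submodule.mkQ_apply]
      obtain ⟨c, hcspan⟩ := Ideal.mem_span_singleton'.1 hmem
      refine ⟨(z - nuI D I * hatLift D I c, c), ⟨?_, ?_⟩, ?_⟩
      · show augD D (z - nuI D I * hatLift D I c) = 0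
        have e1 : augD (D ⧸ I) (1 - MonoidAlgebra.of ℤ (D ⧸ I) φ⁻¹
            + (Nat.card I : MonoidAlgebra ℤ (D ⧸ I))) = (Nat.card I : ℤ) := by
          rw [map_add, map_sub, map_one, MonoidAlgebra.of_apply, augD_single, map_natCast]
          ring
        rw [map_sub, map_mul, aug_nuI, aug_hatLift, aug_pi D I z, ← hcspan, map_mul, e1]
        ring
      · show piDI D I (z - nuI D I * hatLift D I c)
          = (1 - MonoidAlgebra.of ℤ (D ⧸ I) φ⁻¹) * c
        rw [map_sub, map_mul, pi_nuI, pi_hatLift, ← hcspan]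
        have h4 : c * (1 - MonoidAlgebra.of ℤ (D ⧸ I) φ⁻¹
            + (Nat.card I : MonoidAlgebra ℤ (D ⧸ I)))
            = (1 - MonoidAlgebra.of ℤ (D ⧸ I) φ⁻¹) * c
              + (Nat.card I : MonoidAlgebra ℤ (D ⧸ I)) * c := by
          rw [mul_add, ← hqcomm c, ← (Nat.cast_commute (Nat.card ↥I) c).eq]
        rw [h4]
        abel
      · show (z - nuI D I * hatLift D I c) + nuI D I * hatLift D I c = z
        abel
    · rintro ⟨w, ⟨hw1, hw2⟩, rfl⟩
      show (Ideal.span _ : Ideal (MonoidAlgebra ℤ (D ⧸ I))).mkQ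
        (piDI D I (w.1 + nuI D I * hatLift D I w.2)) = 0
      rw [Submodule.mkQ_apply, Submodule.Quotient.mk_eq_zero]
      refine Ideal.mem_span_singleton'.2 ⟨w.2, ?_⟩
      rw [map_add, map_mul, pi_nuI, pi_hatLift, show piDI D I w.1 = _ from hw2,
        mul_add, ← hqcomm w.2, ← (Nat.cast_commute (Nat.card ↥I) w.2).eq]
end

section
/- Let p be an odd prime, C a finite cyclic group with generator φ, n a positive integer divisible by p, and k an integer. Then the ideal of the group ring ℤ_p[C] generated by the two elements 1 − φ^{-1} + n and φ^k + 1 is the unit ideal, i.e., ℤ_p[C]/(1 − φ^{-1} + n, φ^k + 1) = 0. -/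
lemma padic_isUnit_of_toZMod_ne_zero {p : ℕ} [Fact p.Prime] {z : ℤ_[p]}
    (h : PadicInt.toZMod z ≠ 0) : IsUnit z := by
  rw [← IsLocalRing.notMem_maximalIdeal, ← PadicInt.ker_toZMod, RingHom.mem_ker]
  exact h

/-- Let `p` be an odd prime, `C` a finite cyclic group with generator `φ`,
`n` a positive integer divisible by `p`, and `k` an integer.  Then the ideal
of `ℤ_p[C]` generated by `1 − φ⁻¹ + n` and `φ^k + 1` is the unit ideal. -/
theorem span_eq_top_of_odd_prime (p : ℕ) [Fact p.Prime] (hodd : Odd p)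
    (C : Type) [CommGroup C] [Finite C]
    (φ : C) (hφ : ∀ x : C, x ∈ Subgroup.zpowers φ)
    (n : ℕ) (hn : 0 < n) (hpn : p ∣ n) (k : ℤ) :
    Ideal.span
      {(1 : MonoidAlgebra ℤ_[p] C) - MonoidAlgebra.of ℤ_[p] C φ⁻¹ +
          (n : MonoidAlgebra ℤ_[p] C),
        MonoidAlgebra.of ℤ_[p] C (φ ^ k) + 1} = ⊤ := by
  set R := MonoidAlgebra ℤ_[p] C with hR
  set I : Ideal R := Ideal.span
      {(1 : R) - MonoidAlgebra.of ℤ_[p] C φ⁻¹ + (n : R),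
        MonoidAlgebra.of ℤ_[p] C (φ ^ k) + 1} with hI
  rw [← Ideal.Quotient.zero_eq_one_iff]
  set π : R →+* R ⧸ I := Ideal.Quotient.mk I with hπ
  have hmem₁ : (1 : R) - MonoidAlgebra.of ℤ_[p] C φ⁻¹ + (n : R) ∈ I :=
    Ideal.subset_span (by simp)
  have hmem₂ : MonoidAlgebra.of ℤ_[p] C (φ ^ k) + 1 ∈ I :=
    Ideal.subset_span (by simp)
  have ha : π ((1 : R) - MonoidAlgebra.of ℤ_[p] C φ⁻¹ + (n : R)) = 0 :=
    (Ideal.Quotient.eq_zero_iff_mem).2 hmem₁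
  have hb : π (MonoidAlgebra.of ℤ_[p] C (φ ^ k) + 1) = 0 :=
    (Ideal.Quotient.eq_zero_iff_mem).2 hmem₂
  -- the monoid hom from C to the units of the quotient
  set f : C →* R ⧸ I := π.toMonoidHom.comp (MonoidAlgebra.of ℤ_[p] C) with hf
  set g : C →* (R ⧸ I)ˣ := f.toHomUnits with hg
  -- the scalar 1 + n is a unit in ℤ_[p]
  have hzmod : PadicInt.toZMod ((1 : ℤ_[p]) + (n : ℤ_[p])) = 1 := by
    rw [map_add, map_one, map_natCast, (ZMod.natCast_eq_zero_iff n p).2 hpn, add_zero]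
  have hc : IsUnit ((1 : ℤ_[p]) + (n : ℤ_[p])) := by
    apply padic_isUnit_of_toZMod_ne_zero
    rw [hzmod]; exact one_ne_zero
  set c : ℤ_[p]ˣ := hc.unit with hcdef
  set d : ℤ_[p]ˣ := (c⁻¹) ^ k with hddef
  -- d reduces to 1 mod p, so ↑d + 1 reduces to 2 and is a unit
  have hdz : PadicInt.toZMod (d : ℤ_[p]) = 1 := by
    have : Units.map (PadicInt.toZMod (p := p)).toMonoidHom c = 1 := by
      ext
      simp [hcdef, hzmod]
    calc PadicInt.toZMod (d : ℤ_[p])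
        = ((Units.map (PadicInt.toZMod (p := p)).toMonoidHom d : (ZMod p)ˣ) : ZMod p) := rfl
      _ = (((Units.map (PadicInt.toZMod (p := p)).toMonoidHom c)⁻¹ ^ k : (ZMod p)ˣ) : ZMod p) := by
          rw [hddef, map_zpow, map_inv]
      _ = 1 := by rw [this]; simp
  have hu : IsUnit ((d : ℤ_[p]) + 1) := by
    apply padic_isUnit_of_toZMod_ne_zero
    rw [map_add, map_one, hdz]
    have h2 : ((2 : ℕ) : ZMod p) ≠ 0 := by
      rw [Ne, ZMod.natCast_eq_zero_iff]
      intro h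
      have := (Nat.prime_dvd_prime_iff_eq (Fact.out : p.Prime) Nat.prime_two).1 h
      rw [this] at hodd
      exact (Nat.not_odd_iff_even.2 even_two) hodd
    rw [one_add_one_eq_two]
    simpa using h2
  -- the unit w = image of φ
  set w : (R ⧸ I)ˣ := g φ with hw
  set A : ℤ_[p] →+* R ⧸ I := π.comp (algebraMap ℤ_[p] R) with hA
  have hwinv : ((w⁻¹ : (R ⧸ I)ˣ) : R ⧸ I) = A ((1 : ℤ_[p]) + (n : ℤ_[p])) := by
    have h1 : ((w⁻¹ : (R ⧸ I)ˣ) : R ⧸ I) = π (MonoidAlgebra.of ℤ_[p] C φ⁻¹) := by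
      rw [hw, ← map_inv g φ]
      rfl
    have h2 : π (MonoidAlgebra.of ℤ_[p] C φ⁻¹) = 1 + (n : R ⧸ I) := by
      have := ha
      rw [map_add, map_sub, map_one, map_natCast] at this
      linear_combination -this
    rw [h1, h2, hA, RingHom.comp_apply, map_add, map_add, map_one, map_one,
      map_natCast, map_natCast]
  have hwinv_units : w⁻¹ = Units.map A.toMonoidHom c := by
    ext
    rw [hwinv]
    simp [hcdef]
  have hwk : ((w ^ k : (R ⧸ I)ˣ) : R ⧸ I) = A (d : ℤ_[p]) := by
    have : w ^ k = Units.map A.toMonoidHom d := by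
      rw [hddef, map_zpow, map_inv, ← hwinv_units, inv_inv]
    rw [this]
    rfl
  have hbk : ((w ^ k : (R ⧸ I)ˣ) : R ⧸ I) = π (MonoidAlgebra.of ℤ_[p] C (φ ^ k)) := by
    rw [hw, ← map_zpow g φ k]
    rfl
  have hzero : A ((d : ℤ_[p]) + 1) = 0 := by
    rw [map_add, map_one, ← hwk, hbk]
    rw [map_add, map_one] at hb
    exact hb
  have : IsUnit (0 : R ⧸ I) := by
    rw [← hzero]
    exact hu.map A
  exact isUnit_zero_iff.1 this
end

section
/- Let I ⊆ D be subgroups of G such that p divides #I and j ∉ D. Then there exist positive divisors d and e of r with d ∣ e such that either (I) D = ⟨σ, τ^{r/e}⟩ and I = ⟨σ, τ^{r/d}⟩, or (II) e is even, D = ⟨σ, τ^{r/e}·j⟩ and I = ⟨σ, (τ^{r/e}·j)^{e/d}⟩. -/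
open Subgroup in
lemma cyclic_sub {G : Type*} [Group G] [Finite G] (g : G) (H : Subgroup G)
    (hH : H ≤ Subgroup.zpowers g) :
    ∃ d : ℕ, 0 < d ∧ d ∣ orderOf g ∧ H = Subgroup.zpowers (g ^ (orderOf g / d)) := by
  set n := orderOf g with hn
  have hnpos : 0 < n := orderOf_pos g
  -- the subgroup of exponents
  let S : AddSubgroup ℤ :=
    { carrier := {k : ℤ | g ^ k ∈ H}
      add_mem' := fun {a b} ha hb => by
        simp only [Set.mem_setOf_eq, zpow_add] at *; exact mul_mem ha hb
      zero_mem' := by simp only [Set.mem_setOf_eq, zpow_zero]; exact one_mem H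
      neg_mem' := fun {a} ha => by
        simp only [Set.mem_setOf_eq, zpow_neg] at *; exact inv_mem ha }
  obtain ⟨a, haS⟩ := Int.subgroup_cyclic S
  have hmemS : ∀ k : ℤ, k ∈ S ↔ ∃ t : ℤ, k = a * t := by
    intro k
    rw [haS]
    constructor
    · intro hk
      rw [← AddSubgroup.zmultiples_eq_closure] at hk
      obtain ⟨t, ht⟩ := hk
      exact ⟨t, by rw [← ht]; simp [mul_comm]⟩
    · rintro ⟨t, rfl⟩
      rw [← AddSubgroup.zmultiples_eq_closure]
      exact ⟨a * t / a, by by_cases h : a = 0 <;> simp [h, mul_comm]⟩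

  have hnS : (n : ℤ) ∈ S := by
    show g ^ (n : ℤ) ∈ H
    rw [zpow_natCast, hn, pow_orderOf_eq_one]
    exact one_mem H
  set m := a.natAbs with hm
  have haN : a ∈ S := (hmemS a).mpr ⟨1, (mul_one a).symm⟩
  have hmS : (m : ℤ) ∈ S := by
    rcases Int.natAbs_eq a with h | h
    · rwa [← h]
    · rw [show ((m : ℤ)) = -a by omega]
      exact S.neg_mem haN
  obtain ⟨t, ht⟩ := (hmemS n).mp hnS
  have hmn : m ∣ n := by
    have h2 : m ∣ (n:ℤ).natAbs := Int.natAbs_dvd_natAbs.mpr ⟨t, ht⟩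
    simpa using h2
  have hm0 : m ≠ 0 := by
    intro h0
    have : a = 0 := by omega
    rw [this, zero_mul] at ht
    omega
  refine ⟨n / m, Nat.div_pos (Nat.le_of_dvd hnpos hmn) (Nat.pos_of_ne_zero hm0),
    Nat.div_dvd_of_dvd hmn, ?_⟩
  rw [Nat.div_div_self hmn hnpos.ne']
  apply le_antisymm
  · intro x hx
    obtain ⟨k, hk⟩ := Subgroup.mem_zpowers_iff.mp (hH hx)
    have hkS : k ∈ S := by show g ^ k ∈ H; rw [hk]; exact hx
    obtain ⟨u, hu⟩ := (hmemS k).mp hkS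
    rw [Subgroup.mem_zpowers_iff]
    rcases Int.natAbs_eq a with h | h
    · exact ⟨u, by rw [← hk, hu, h, ← zpow_natCast, ← zpow_mul]⟩
    · exact ⟨-u, by rw [← hk, hu, h, ← zpow_natCast, ← zpow_mul]; rw [hm]; ring_nf⟩
  · rw [Subgroup.zpowers_le]
    have h2 : g ^ (m : ℤ) ∈ H := hmS
    rwa [zpow_natCast] at h2



lemma closure_of_map_eq {G A : Type*} [Group G] [Group A] (ψ : G →* A) (z x : G)
    (hker : ψ.ker = Subgroup.closure {z}) (H : Subgroup G) (hkH : ψ.ker ≤ H)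
    (hmap : H.map ψ = Subgroup.zpowers (ψ x)) : H = Subgroup.closure {z, x} := by
  apply le_antisymm
  · intro g hg
    have hgm : ψ g ∈ Subgroup.zpowers (ψ x) := by
      rw [← hmap]; exact Subgroup.mem_map_of_mem ψ hg
    obtain ⟨k, hk⟩ := Subgroup.mem_zpowers_iff.mp hgm
    have hker' : g * (x ^ k)⁻¹ ∈ ψ.ker := by
      rw [MonoidHom.mem_ker, map_mul, map_inv, map_zpow, hk, mul_inv_cancel]
    have h1 : g * (x ^ k)⁻¹ ∈ Subgroup.closure {z, x} := by
      rw [hker] at hker'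
      exact Subgroup.closure_mono (Set.singleton_subset_iff.mpr (Set.mem_insert z {x})) hker'
    have hx : x ∈ Subgroup.closure {z, x} :=
      Subgroup.subset_closure (Set.mem_insert_of_mem _ rfl)
    have h2 : x ^ k ∈ Subgroup.closure {z, x} := Subgroup.zpow_mem _ hx k
    have := mul_mem h1 h2
    rwa [inv_mul_cancel_right] at this
  · rw [Subgroup.closure_le]
    rintro y (rfl | rfl)
    · exact hkH (hker ▸ Subgroup.subset_closure rfl)
    · have : ψ y ∈ H.map ψ := by rw [hmap]; exact Subgroup.mem_zpowers _
      obtain ⟨h, hh, hhy⟩ := this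
      have : h⁻¹ * y ∈ ψ.ker := by rw [MonoidHom.mem_ker, map_mul, map_inv, hhy, inv_mul_cancel]
      have := mul_mem hh (hkH this)
      rwa [mul_inv_cancel_left] at this



lemma two_cases (c : Multiplicative (ZMod 2)) : c = 1 ∨ c = Multiplicative.ofAdd 1 := by
  have : ∀ x : ZMod 2, x = 0 ∨ x = 1 := by decide
  rcases this c.toAdd with h | h
  · left; rw [← ofAdd_toAdd c, h]; rfl
  · right; rw [← ofAdd_toAdd c, h]

section Main

variable (p r : ℕ) (hp : p.Prime) (hodd : Odd p) (hr : 0 < r) (hrp : r ∣ p - 1)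
    (s : ℤ) (hs : orderOf ((s : ZMod p)) = r)
    (Γ : Type) [Group Γ] [Finite Γ] (σ τ : Γ)
    (hσ : σ ^ p = 1) (hτ : τ ^ r = 1) (hrel : τ * σ * τ⁻¹ = σ ^ s)
    (hgen : Subgroup.closure {σ, τ} = ⊤)
    (hcard : Nat.card Γ = p * r)

include hp hr hσ hτ hgen hcard in
lemma ord_sigma : orderOf σ = p := by
  have hd : orderOf σ ∣ p := orderOf_dvd_of_pow_eq_one hσ
  rcases (Nat.Prime.eq_one_or_self_of_dvd hp _ hd) with h1 | h1
  · exfalso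
    have hσ1 : σ = 1 := orderOf_eq_one_iff.mp h1
    have : Subgroup.closure ({σ, τ} : Set Γ) = Subgroup.zpowers τ := by
      rw [hσ1, Subgroup.zpowers_eq_closure]
      apply le_antisymm
      · rw [Subgroup.closure_le]
        rintro y (rfl | rfl)
        · exact one_mem _
        · exact Subgroup.subset_closure rfl
      · exact Subgroup.closure_mono (by simp)
    rw [hgen] at this
    have hcard2 : Nat.card Γ = orderOf τ := by
      rw [← Nat.card_zpowers, ← this, Subgroup.card_top]
    have hτr : orderOf τ ∣ r := orderOf_dvd_of_pow_eq_one hτ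
    have : orderOf τ ≤ r := Nat.le_of_dvd hr hτr
    have hp2 : 2 ≤ p := hp.two_le
    nlinarith [hcard, hcard2]
  · exact h1

include hp hs hσ hrel in
lemma exists_conj_inv (hr0 : r ≠ 0) : ∃ t : ℤ, τ * σ ^ t * τ⁻¹ = σ := by
  have hu : IsUnit ((s : ZMod p)) := by
    apply IsUnit.of_pow_eq_one (n := r) _ hr0
    rw [← hs]; exact pow_orderOf_eq_one _
  obtain ⟨c, hc⟩ := hu.exists_right_inv
  haveI : NeZero p := ⟨hp.pos.ne'⟩
  refine ⟨(c.val : ℤ), ?_⟩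
  have h1 : τ * σ ^ (c.val : ℤ) * τ⁻¹ = σ ^ (s * (c.val : ℤ)) := by
    rw [← conj_zpow, hrel, ← zpow_mul]
  rw [h1]
  have h3 : (p : ℤ) ∣ s * (c.val : ℤ) - 1 := by
    apply (ZMod.intCast_zmod_eq_zero_iff_dvd _ p).mp
    push_cast
    rw [ZMod.natCast_val, ZMod.cast_id, sub_eq_zero, hc]
  obtain ⟨w, hw⟩ := h3
  have : s * (c.val : ℤ) = 1 + p * w := by linarith
  rw [this, zpow_add, zpow_one, zpow_mul]
  have : (σ : Γ) ^ (p : ℤ) = 1 := by rw [zpow_natCast, hσ]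
  rw [this, one_zpow, mul_one]

end Main

section Main2

variable (p r : ℕ) (hp : p.Prime) (hodd : Odd p) (hr : 0 < r) (hrp : r ∣ p - 1)
    (s : ℤ) (hs : orderOf ((s : ZMod p)) = r)
    (Γ : Type) [Group Γ] [Finite Γ] (σ τ : Γ)
    (hσ : σ ^ p = 1) (hτ : τ ^ r = 1) (hrel : τ * σ * τ⁻¹ = σ ^ s)
    (hgen : Subgroup.closure {σ, τ} = ⊤)
    (hcard : Nat.card Γ = p * r)

set_option linter.unusedSectionVars false

include hp hr hs hσ hrel hgen in
lemma zpowers_normal : (Subgroup.zpowers σ).Normal := by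
  obtain ⟨t, ht⟩ := exists_conj_inv p r hp s hs Γ σ τ hσ hrel hr.ne'
  have h4' : τ⁻¹ * σ * τ = σ ^ t := by
    conv_lhs => rw [← ht]
    group
  have hσn : σ ∈ Subgroup.normalizer (Subgroup.zpowers σ : Set Γ) :=
    Subgroup.le_normalizer (Subgroup.mem_zpowers σ)
  have hτn : τ ∈ Subgroup.normalizer (Subgroup.zpowers σ : Set Γ) := by
    rw [Subgroup.mem_normalizer_iff]
    intro h
    constructor
    · rintro ⟨k, rfl⟩
      refine ⟨s * k, ?_⟩
      show σ ^ (s * k) = τ * σ ^ k * τ⁻¹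
      rw [zpow_mul, ← hrel, conj_zpow]
    · rintro ⟨k, hk⟩
      have hk' : σ ^ k = τ * h * τ⁻¹ := hk
      have hh : h = τ⁻¹ * σ ^ k * τ := by rw [hk']; group
      refine ⟨t * k, ?_⟩
      show σ ^ (t * k) = h
      rw [hh, zpow_mul, ← h4']
      rw [show τ⁻¹ * σ * τ = τ⁻¹ * σ * τ⁻¹⁻¹ by rw [inv_inv], conj_zpow, inv_inv]
  rw [← Subgroup.normalizer_eq_top_iff, eq_top_iff, ← hgen, Subgroup.closure_le]
  rintro x hx
  rcases hx with rfl | rfl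
  · exact hσn
  · exact hτn

end Main2





lemma classify {C : Type*} [Group C] [Finite C] (u : C) (r : ℕ) (hu : orderOf u = r)
    (K : Subgroup (C × Multiplicative (ZMod 2)))
    (hK1 : K.map (MonoidHom.fst C (Multiplicative (ZMod 2))) ≤ Subgroup.zpowers u)
    (hjK : ((1 : C), Multiplicative.ofAdd (1 : ZMod 2)) ∉ K) :
    ∃ e : ℕ, 0 < e ∧ e ∣ r ∧
      (K = Subgroup.zpowers ((u ^ (r / e), 1) : C × Multiplicative (ZMod 2)) ∨
       (Even e ∧
        K = Subgroup.zpowers ((u ^ (r / e), Multiplicative.ofAdd (1 : ZMod 2)) :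
          C × Multiplicative (ZMod 2)))) := by
  obtain ⟨e, he0, her, hK1e⟩ := cyclic_sub u _ hK1
  rw [hu] at her hK1e
  set g1 := u ^ (r / e) with hg1
  have hg1K1 : g1 ∈ K.map (MonoidHom.fst C (Multiplicative (ZMod 2))) := by
    rw [hK1e]; exact Subgroup.mem_zpowers g1
  obtain ⟨w, hwK, hw1⟩ := hg1K1
  obtain ⟨a, ε⟩ := w
  simp only [MonoidHom.coe_fst] at hw1
  subst hw1
  have hKz : K = Subgroup.zpowers ((g1, ε) : C × Multiplicative (ZMod 2)) := by
    apply le_antisymm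
    · rintro ⟨a, b⟩ hab
      have ha : a ∈ K.map (MonoidHom.fst C (Multiplicative (ZMod 2))) :=
        ⟨(a, b), hab, rfl⟩
      rw [hK1e] at ha
      obtain ⟨k, hk⟩ := Subgroup.mem_zpowers_iff.mp ha
      have hmem : ((a, b) : C × Multiplicative (ZMod 2)) * ((g1, ε) ^ k)⁻¹ ∈ K :=
        mul_mem hab (inv_mem (Subgroup.zpow_mem K hwK k))
      have heq : ((a, b) : C × Multiplicative (ZMod 2)) * ((g1, ε) ^ k)⁻¹
          = (1, b * (ε ^ k)⁻¹) := by
        simp [Prod.ext_iff, hk]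
      rw [heq] at hmem
      rcases two_cases (b * (ε ^ k)⁻¹) with hc | hc
      · have hbe : b = ε ^ k := by
          have := mul_inv_eq_one.mp hc
          exact this
        rw [Subgroup.mem_zpowers_iff]
        exact ⟨k, by simp [Prod.ext_iff, hk, ← hbe]⟩
      · rw [hc] at hmem
        exact absurd hmem hjK
    · rw [Subgroup.zpowers_le]; exact hwK
  refine ⟨e, he0, her, ?_⟩
  rcases two_cases ε with hε | hε
  · left; rw [hKz, hε]
  · right
    refine ⟨?_, by rw [hKz, hε]⟩
    by_contra hodd
    rw [Nat.not_even_iff_odd] at hodd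
    apply hjK
    have h1 : g1 ^ e = 1 := by
      rw [hg1, ← pow_mul, Nat.div_mul_cancel her, ← hu, pow_orderOf_eq_one]
    have h2 : ε ^ e = Multiplicative.ofAdd 1 := by
      have hcast : ((e : ℕ) : ZMod 2) = 1 := by
        rw [← ZMod.natCast_mod, Nat.odd_iff.mp hodd, Nat.cast_one]
      rw [hε, ← ofAdd_nsmul, nsmul_eq_mul, mul_one, hcast]
    have hpow := pow_mem hwK e
    rwa [Prod.pow_mk, h1, h2] at hpow

lemma nat_arith {d e r : ℕ} (hd0 : 0 < d) (hde : d ∣ e) (her : e ∣ r) :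
    r / e * (e / d) = r / d := by
  have h1 : r / e * (e / d) * d = r := by
    rw [mul_assoc, Nat.div_mul_cancel hde, Nat.div_mul_cancel her]
  exact (Nat.div_eq_of_eq_mul_left hd0 h1.symm).symm


/-- Classification of the pairs of subgroups `I ⊆ D` of `G = (C_p ⋊ C_r) × ⟨j⟩`
with `p ∣ #I` and `j ∉ D`: there are divisors `d ∣ e ∣ r` such that either
(I) `D = ⟨σ, τ^{r/e}⟩` and `I = ⟨σ, τ^{r/d}⟩`, or (II) `e` is even,
`D = ⟨σ, τ^{r/e}·j⟩` and `I = ⟨σ, (τ^{r/e}·j)^{e/d}⟩`. -/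
theorem subgroup_pairs_classification
    (p r : ℕ) (hp : p.Prime) (hodd : Odd p) (hr : 0 < r) (hrp : r ∣ p - 1)
    (s : ℤ) (hs : orderOf ((s : ZMod p)) = r)
    (Γ : Type) [Group Γ] [Finite Γ] (σ τ : Γ)
    (hσ : σ ^ p = 1) (hτ : τ ^ r = 1) (hrel : τ * σ * τ⁻¹ = σ ^ s)
    (hgen : Subgroup.closure {σ, τ} = ⊤)
    (hcard : Nat.card Γ = p * r)
    (D I : Subgroup (Γ × Multiplicative (ZMod 2))) (hID : I ≤ D)
    (hpI : p ∣ Nat.card I)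
    (hjD : ((1 : Γ), Multiplicative.ofAdd (1 : ZMod 2)) ∉ D) :
    ∃ d e : ℕ, 0 < d ∧ d ∣ e ∧ e ∣ r ∧
      ((D = Subgroup.closure {((σ, 1) : Γ × Multiplicative (ZMod 2)),
            (τ ^ (r / e), 1)} ∧
        I = Subgroup.closure {((σ, 1) : Γ × Multiplicative (ZMod 2)),
            (τ ^ (r / d), 1)}) ∨
       (Even e ∧
        D = Subgroup.closure {((σ, 1) : Γ × Multiplicative (ZMod 2)),
            (τ ^ (r / e), Multiplicative.ofAdd (1 : ZMod 2))} ∧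
        I = Subgroup.closure {((σ, 1) : Γ × Multiplicative (ZMod 2)),
            (((τ ^ (r / e), Multiplicative.ofAdd (1 : ZMod 2)) :
              Γ × Multiplicative (ZMod 2)) ^ (e / d))})) := by
  classical
  haveI : Fact p.Prime := ⟨hp⟩
  set G' := Γ × Multiplicative (ZMod 2)
  have hordσ : orderOf σ = p := ord_sigma p r hp hr Γ σ τ hσ hτ hgen hcard
  haveI hNnormal : (Subgroup.zpowers σ).Normal :=
    zpowers_normal p r hp hr s hs Γ σ τ hσ hrel hgen
  set N := Subgroup.zpowers σ with hNdef
  set π : Γ →* Γ ⧸ N := QuotientGroup.mk' N with hπdef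
  have hcardN : Nat.card N = p := by rw [hNdef, Nat.card_zpowers, hordσ]
  have hcardQ : Nat.card (Γ ⧸ N) = r := by
    have h := Subgroup.card_eq_card_quotient_mul_card_subgroup N
    rw [hcard, hcardN] at h
    have hppos : 0 < p := hp.pos
    nlinarith [h]
  set u : Γ ⧸ N := π τ with hudef
  have hzu : Subgroup.zpowers u = ⊤ := by
    have hsurj : Function.Surjective π := QuotientGroup.mk'_surjective N
    have h1 : (⊤ : Subgroup Γ).map π = ⊤ := Subgroup.map_top_of_surjective π hsurj
    rw [← hgen, MonoidHom.map_closure] at h1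
    have himg : π '' {σ, τ} = {1, u} := by
      rw [Set.image_pair]
      congr 1
      rw [hπdef]
      exact (QuotientGroup.eq_one_iff σ).mpr (Subgroup.mem_zpowers σ)
    rw [himg] at h1
    have h2 : Subgroup.closure ({1, u} : Set (Γ ⧸ N)) = Subgroup.zpowers u := by
      rw [Subgroup.zpowers_eq_closure]
      apply le_antisymm
      · rw [Subgroup.closure_le]
        rintro y hy
        rcases hy with rfl | rfl
        · exact one_mem _
        · exact Subgroup.subset_closure rfl
      · exact Subgroup.closure_mono (by simp)
    rw [h2] at h1
    exact h1
  have hordu : orderOf u = r := by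
    rw [← Nat.card_zpowers, hzu, Subgroup.card_top, hcardQ]
  set ψ : G' →* (Γ ⧸ N) × Multiplicative (ZMod 2) :=
    MonoidHom.prodMap π (MonoidHom.id (Multiplicative (ZMod 2))) with hψdef
  have hψapp : ∀ (a : Γ) (b : Multiplicative (ZMod 2)), ψ (a, b) = (π a, b) := by
    intro a b; rfl
  have hkerψ : ψ.ker = Subgroup.closure {((σ, 1) : G')} := by
    rw [hψdef, MonoidHom.ker_prodMap]
    apply le_antisymm
    · rintro ⟨x, y⟩ hxy
      obtain ⟨hx, hy⟩ := Subgroup.mem_prod.mp hxy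
      have hxN : (x, y).1 ∈ N := (QuotientGroup.eq_one_iff _).mp hx
      obtain ⟨k, rfl⟩ := hxN
      have hy1 : y = 1 := hy
      subst hy1
      have heq : ((σ, 1) : G') ^ k = ((σ ^ k, 1) : G') := by simp [Prod.ext_iff]
      have hσcl : ((σ, 1) : G') ∈ Subgroup.closure {((σ, 1) : G')} :=
        Subgroup.subset_closure rfl
      have hmem2 : ((σ, 1) : G') ^ k ∈ Subgroup.closure {((σ, 1) : G')} :=
        Subgroup.zpow_mem _ hσcl k
      rwa [heq] at hmem2
    · rw [Subgroup.closure_le]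
      rintro y hy
      rw [Set.mem_singleton_iff] at hy
      subst hy
      refine Subgroup.mem_prod.mpr ⟨?_, ?_⟩
      · exact MonoidHom.mem_ker.mpr ((QuotientGroup.eq_one_iff σ).mpr (Subgroup.mem_zpowers σ))
      · rfl
  -- (σ, 1) ∈ I
  have hσI : ((σ, 1) : G') ∈ I := by
    obtain ⟨g, hg⟩ := exists_prime_orderOf_dvd_card' p hpI
    have hgord : orderOf ((g : G')) = p := by
      rw [← hg]
      exact orderOf_injective I.subtype Subtype.coe_injective g
    set x := (g : G') with hxdef
    have hxI : x ∈ I := SetLike.coe_mem g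
    have hlcm : Nat.lcm (orderOf x.1) (orderOf x.2) = p := by
      rw [← Prod.orderOf]
      exact hgord
    have hb2 : orderOf x.2 ∣ 2 := by
      have h := orderOf_dvd_natCard x.2
      have : Nat.card (Multiplicative (ZMod 2)) = 2 := by
        simp [Nat.card_eq_fintype_card]
      rwa [this] at h
    have hbp : orderOf x.2 ∣ p := hlcm ▸ Nat.dvd_lcm_right _ _
    have hb1 : orderOf x.2 = 1 := by
      have h2p : ¬ (2 ∣ p) := by
        rw [Nat.odd_iff] at hodd
        omega
      have := Nat.dvd_gcd hb2 hbp
      rwa [Nat.Coprime.gcd_eq_one (Nat.prime_two.coprime_iff_not_dvd.mpr h2p), Nat.dvd_one]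
        at this
    have hx2 : x.2 = 1 := orderOf_eq_one_iff.mp hb1
    have hordx1 : orderOf x.1 = p := by
      rw [hb1, Nat.lcm_one_right] at hlcm
      exact hlcm
    have hcop : Nat.Coprime p r := by
      apply hp.coprime_iff_not_dvd.mpr
      intro hdvd
      have hple := Nat.le_of_dvd (by have := hp.two_le; omega : 0 < p - 1) (hdvd.trans hrp)
      have := hp.two_le
      omega
    have hπx1 : π x.1 = 1 := by
      have h1 : orderOf (π x.1) ∣ p := hordx1 ▸ orderOf_map_dvd π x.1
      have h2 : orderOf (π x.1) ∣ r := hcardQ ▸ orderOf_dvd_natCard (π x.1)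
      have := Nat.dvd_gcd h1 h2
      rw [Nat.Coprime.gcd_eq_one hcop, Nat.dvd_one] at this
      exact orderOf_eq_one_iff.mp this
    have hx1N : x.1 ∈ N := (QuotientGroup.eq_one_iff _).mp hπx1
    have hzeq : Subgroup.zpowers x.1 = N := by
      apply Subgroup.eq_of_le_of_card_ge (Subgroup.zpowers_le.mpr hx1N)
      rw [hcardN, Nat.card_zpowers, hordx1]
    have hσz : σ ∈ Subgroup.zpowers x.1 := by rw [hzeq]; exact Subgroup.mem_zpowers σ
    obtain ⟨k, hk⟩ := hσz
    have hk' : x.1 ^ k = σ := hk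
    have hfin : ((σ, 1) : G') = x ^ k := by
      have : (x ^ k : G') = (x.1 ^ k, x.2 ^ k) := by simp [Prod.ext_iff]
      rw [this, hk', hx2, one_zpow]
    rw [hfin]
    exact Subgroup.zpow_mem I hxI k
  have hkerI : ψ.ker ≤ I := by
    rw [hkerψ, Subgroup.closure_le, Set.singleton_subset_iff]
    exact hσI
  have hkerD : ψ.ker ≤ D := hkerI.trans hID
  -- j not in image of D
  have hjK : ((1 : Γ ⧸ N), Multiplicative.ofAdd (1 : ZMod 2)) ∉ D.map ψ := by
    rintro ⟨⟨γ, c⟩, hmemD, heq⟩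
    rw [hψapp] at heq
    rw [Prod.mk.injEq] at heq
    obtain ⟨hγ1, hc1⟩ := heq
    have hγN : γ ∈ N := (QuotientGroup.eq_one_iff _).mp hγ1
    have hγD : ((γ, 1) : G') ∈ D := by
      apply hkerD
      rw [MonoidHom.mem_ker, hψapp]
      rw [Prod.ext_iff]
      exact ⟨(QuotientGroup.eq_one_iff γ).mpr hγN, rfl⟩
    have : ((1 : Γ), c) ∈ D := by
      have h := mul_mem (inv_mem hγD) hmemD
      have heq2 : ((γ, 1) : G')⁻¹ * (γ, c) = (1, c) := by simp [Prod.ext_iff]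
      rwa [heq2] at h
    rw [hc1] at this
    exact hjD this
  have hK1 : (D.map ψ).map (MonoidHom.fst (Γ ⧸ N) (Multiplicative (ZMod 2)))
      ≤ Subgroup.zpowers u := by rw [hzu]; exact le_top
  obtain ⟨e, he0, her, hcase⟩ := classify u r hordu (D.map ψ) hK1 hjK
  rcases hcase with hDe | ⟨heven, hDe⟩
  · -- Case I
    have hψxD : ψ ((τ ^ (r / e), 1) : G') = ((u ^ (r / e), 1)) := by
      rw [hψapp, map_pow]
    have hD : D = Subgroup.closure {((σ, 1) : G'), (τ ^ (r / e), 1)} :=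
      closure_of_map_eq ψ _ _ hkerψ D hkerD (by rw [hψxD]; exact hDe)
    have hord1 : orderOf (u ^ (r / e)) = e := by
      rw [orderOf_pow, hordu, Nat.gcd_eq_right (Nat.div_dvd_of_dvd her),
        Nat.div_div_self her hr.ne']
    set y : (Γ ⧸ N) × Multiplicative (ZMod 2) := (u ^ (r / e), 1) with hydef
    have hordy : orderOf y = e := by
      rw [hydef, Prod.orderOf]
      simp [hord1]
    have hmapI : I.map ψ ≤ Subgroup.zpowers y := by
      rw [← hDe]; exact Subgroup.map_mono hID
    obtain ⟨d, hd0, hde, hIe⟩ := cyclic_sub y _ hmapI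
    rw [hordy] at hde hIe
    have harith : r / e * (e / d) = r / d := nat_arith hd0 hde her
    have hψxI : ψ ((τ ^ (r / d), 1) : G') = y ^ (e / d) := by
      rw [hψapp, map_pow]
      rw [hydef]
      have : (y ^ (e / d) : (Γ ⧸ N) × Multiplicative (ZMod 2))
          = ((u ^ (r / e)) ^ (e / d), 1) := by simp [hydef, Prod.ext_iff]
      rw [this, ← pow_mul, harith]
    have hI : I = Subgroup.closure {((σ, 1) : G'), (τ ^ (r / d), 1)} :=
      closure_of_map_eq ψ _ _ hkerψ I hkerI (by rw [hψxI]; exact hIe)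
    exact ⟨d, e, hd0, hde, her, Or.inl ⟨hD, hI⟩⟩
  · -- Case II
    have hψxD : ψ ((τ ^ (r / e), Multiplicative.ofAdd (1 : ZMod 2)) : G')
        = ((u ^ (r / e), Multiplicative.ofAdd (1 : ZMod 2))) := by
      rw [hψapp, map_pow]
    have hD : D = Subgroup.closure {((σ, 1) : G'),
        (τ ^ (r / e), Multiplicative.ofAdd (1 : ZMod 2))} :=
      closure_of_map_eq ψ _ _ hkerψ D hkerD (by rw [hψxD]; exact hDe)
    have hord1 : orderOf (u ^ (r / e)) = e := by
      rw [orderOf_pow, hordu, Nat.gcd_eq_right (Nat.div_dvd_of_dvd her),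
        Nat.div_div_self her hr.ne']
    set y : (Γ ⧸ N) × Multiplicative (ZMod 2) :=
      (u ^ (r / e), Multiplicative.ofAdd (1 : ZMod 2)) with hydef
    have hordy : orderOf y = e := by
      rw [hydef, Prod.orderOf]
      have h2 : orderOf (Multiplicative.ofAdd (1 : ZMod 2)) = 2 := by
        rw [orderOf_ofAdd_eq_addOrderOf, ZMod.addOrderOf_one]
      rw [hord1, h2]
      exact Nat.dvd_antisymm (Nat.lcm_dvd dvd_rfl heven.two_dvd) (Nat.dvd_lcm_left e 2)
    have hmapI : I.map ψ ≤ Subgroup.zpowers y := by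
      rw [← hDe]; exact Subgroup.map_mono hID
    obtain ⟨d, hd0, hde, hIe⟩ := cyclic_sub y _ hmapI
    rw [hordy] at hde hIe
    have hψxI : ψ (((τ ^ (r / e), Multiplicative.ofAdd (1 : ZMod 2)) : G') ^ (e / d))
        = y ^ (e / d) := by
      rw [map_pow, hψxD]
    have hI : I = Subgroup.closure {((σ, 1) : G'),
        ((τ ^ (r / e), Multiplicative.ofAdd (1 : ZMod 2)) : G') ^ (e / d)} :=
      closure_of_map_eq ψ _ _ hkerψ I hkerI (by rw [hψxI]; exact hIe)
    exact ⟨d, e, hd0, hde, her, Or.inr ⟨heven, hD, hI⟩⟩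
end

section
/- Let p be an odd prime, r a positive divisor of p−1, and d, e positive integers with d ∣ e and e ∣ r. Let C_r be a cyclic group of order r with generator τ. Then in the commutative ring ℤ_p[C_r], the ideal generated by τ^{r/d} − 1 and 1 − τ^{-r/e} + pd equals the ideal generated by p and 1 − τ^{-r/e}. -/
lemma key_dvd (t : ℤ) (k : ℕ) : t^2 ∣ (1+t)^k - (1 + k*t) := by
  induction k with
  | zero => simp
  | succ n ih =>
    obtain ⟨w, hw⟩ := ih
    exact ⟨w*(1+t) + n, by push_cast; linear_combination (1+t) * hw⟩

/-- In `ℤ_p[C_r]` (`p` an odd prime, `r ∣ p − 1`, `d ∣ e ∣ r`), the ideal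
generated by `τ^{r/d} − 1` and `1 − τ^{-r/e} + pd` equals the ideal generated
by `p` and `1 − τ^{-r/e}`. -/
theorem ideal_eq_case_I (p : ℕ) [Fact p.Prime] (hodd : Odd p)
    (r : ℕ) (hr : 0 < r) (hrp : r ∣ p - 1)
    (d e : ℕ) (hd : 0 < d) (hde : d ∣ e) (her : e ∣ r)
    (C : Type) [CommGroup C] (τ : C)
    (hcard : Nat.card C = r) (hτ : ∀ x : C, x ∈ Subgroup.zpowers τ) :
    Ideal.span
      {MonoidAlgebra.of ℤ_[p] C (τ ^ (r / d)) - 1,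
       (1 : MonoidAlgebra ℤ_[p] C) - MonoidAlgebra.of ℤ_[p] C ((τ ^ (r / e))⁻¹) +
         ((p * d : ℕ) : MonoidAlgebra ℤ_[p] C)} =
    Ideal.span
      {((p : ℕ) : MonoidAlgebra ℤ_[p] C),
       (1 : MonoidAlgebra ℤ_[p] C) - MonoidAlgebra.of ℤ_[p] C ((τ ^ (r / e))⁻¹)} := by
  have hp : p.Prime := Fact.out
  have he : 0 < e := Nat.pos_of_dvd_of_pos her hr
  set k := e / d with hkdef
  have hdk : d * k = e := Nat.mul_div_cancel' hde
  have hpe : ¬ p ∣ e := by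
    intro hpdvd
    have h1 : e ∣ p - 1 := her.trans hrp
    have h2 : e ≤ p - 1 := Nat.le_of_dvd (by have := hp.two_le; omega) h1
    have h3 := Nat.le_of_dvd he hpdvd
    omega
  obtain ⟨w, hw⟩ : (((p:ℤ)*d)^2) ∣ (1+(p:ℤ)*d)^k - (1 + k*((p:ℤ)*d)) := key_dvd _ _
  set m : ℤ := (e:ℤ) + p*d^2*w with hmdef
  have hdk' : ((d:ℤ)) * k = e := by exact_mod_cast hdk
  have hZ : ((1:ℤ)+p*d)^k - 1 = p * m := by
    rw [hmdef]; linear_combination hw + (p:ℤ)*hdk'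
  have hpm : ¬ (p:ℤ) ∣ m := by
    intro h
    have h3 : (p:ℤ) ∣ m - p*(d^2*w) := dvd_sub h ⟨d^2*w, by ring⟩
    have h4 : (p:ℤ) ∣ (e:ℤ) := by
      have : m - p*(d^2*w) = (e:ℤ) := by rw [hmdef]; ring
      rwa [this] at h3
    exact hpe (Int.natCast_dvd_natCast.mp h4)
  have hmu : IsUnit ((m : ℤ_[p])) := by
    rw [PadicInt.isUnit_iff]
    refine le_antisymm (PadicInt.norm_le_one _) ?_
    by_contra hlt
    push_neg at hlt
    exact hpm ((PadicInt.norm_int_lt_one_iff_dvd m).mp hlt)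
  obtain ⟨u, hu⟩ := hmu
  have hZp : ((1+p*d : ℕ) : ℤ_[p])^k - 1 = (p:ℤ_[p]) * (m:ℤ_[p]) := by
    have := congrArg (fun z : ℤ => (z : ℤ_[p])) hZ
    push_cast at this ⊢
    exact_mod_cast this
  -- abbreviations in the group algebra
  set s : MonoidAlgebra ℤ_[p] C := MonoidAlgebra.of ℤ_[p] C (τ ^ (r/e)) with hs
  set b : MonoidAlgebra ℤ_[p] C := MonoidAlgebra.of ℤ_[p] C ((τ ^ (r/e))⁻¹) with hb
  have hsb : s * b = 1 := by
    rw [hs, hb, ← map_mul, mul_inv_cancel, map_one]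
  have hsbk : s^k * b^k = 1 := by rw [← mul_pow, hsb, one_pow]
  have hof : MonoidAlgebra.of ℤ_[p] C (τ ^ (r/d)) = s^k := by
    rw [hs, ← map_pow, ← pow_mul]
    congr 2
    have hre : (r/e) * e = r := Nat.div_mul_cancel her
    have hrd : r = d * ((r/e)*k) := by
      calc r = (r/e)*e := hre.symm
        _ = (r/e)*(d*k) := by rw [hdk]
        _ = d * ((r/e)*k) := by ring
    exact Nat.div_eq_of_eq_mul_right hd hrd
  set a : MonoidAlgebra ℤ_[p] C := ((1 + p*d : ℕ) : MonoidAlgebra ℤ_[p] C) with ha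
  have haB : ((p*d : ℕ) : MonoidAlgebra ℤ_[p] C) = a - 1 := by
    rw [ha]; push_cast; ring
  set f := algebraMap ℤ_[p] (MonoidAlgebra ℤ_[p] C) with hf
  set mR : MonoidAlgebra ℤ_[p] C := f ((m:ℤ_[p])) with hmR
  set mI : MonoidAlgebra ℤ_[p] C := f ((↑u⁻¹ : ℤ_[p])) with hmI
  have hmi : mR * mI = 1 := by
    rw [hmR, hmI, ← map_mul, ← hu, Units.mul_inv, map_one]
  have hNa : a^k - 1 = ((p:ℕ) : MonoidAlgebra ℤ_[p] C) * mR := by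
    rw [ha, hmR]
    have := congrArg f hZp
    rw [map_sub, map_mul, map_pow, map_one, map_natCast, map_natCast] at this
    exact this
  rw [hof, haB]
  refine le_antisymm (Ideal.span_le.mpr ?_) ?_
  · intro z hz
    simp only [Set.mem_insert_iff, Set.mem_singleton_iff] at hz
    rcases hz with rfl | rfl
    · rw [SetLike.mem_coe, Ideal.mem_span_pair]
      refine ⟨0, s^k * (∑ i ∈ Finset.range k, b^i), ?_⟩
      have hg : (∑ i ∈ Finset.range k, b^i) * (b - 1) = b^k - 1 := geom_sum_mul b k
      linear_combination (-(s^k)) * hg - hsbk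
    · rw [SetLike.mem_coe, Ideal.mem_span_pair]
      exact ⟨(d:ℕ), 1, by push_cast [ha]; ring⟩
  · have hP : ((p:ℕ) : MonoidAlgebra ℤ_[p] C) ∈
        Ideal.span {s^k - 1, 1 - b + (a - 1)} := by
      rw [Ideal.mem_span_pair]
      refine ⟨-(mI * b^k), mI * (∑ i ∈ Finset.range k, a^i * b^(k-1-i)), ?_⟩
      have hS : (∑ i ∈ Finset.range k, a^i * b^(k-1-i)) * (a - b) = a^k - b^k :=
        geom_sum₂_mul a b k
      linear_combination mI * hS - mI*hsbk + mI*hNa + ((p:ℕ) : MonoidAlgebra ℤ_[p] C)*hmi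
    rw [Ideal.span_le]
    intro z hz
    simp only [Set.mem_insert_iff, Set.mem_singleton_iff] at hz
    rcases hz with rfl | rfl
    · exact hP
    · have hda : ((d:ℕ) : MonoidAlgebra ℤ_[p] C) * ((p:ℕ) : MonoidAlgebra ℤ_[p] C)
          = a - 1 := by rw [ha]; push_cast; ring
      rw [SetLike.mem_coe, Ideal.mem_span_pair]
      refine ⟨((d:ℕ) : MonoidAlgebra ℤ_[p] C) * (mI * b^k),
        1 - ((d:ℕ) : MonoidAlgebra ℤ_[p] C) * (mI * (∑ i ∈ Finset.range k, a^i * b^(k-1-i))), ?_⟩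
      have hS : (∑ i ∈ Finset.range k, a^i * b^(k-1-i)) * (a - b) = a^k - b^k :=
        geom_sum₂_mul a b k
      linear_combination (-((d:ℕ) : MonoidAlgebra ℤ_[p] C)) *
        (mI * hS - mI*hsbk + mI*hNa + ((p:ℕ) : MonoidAlgebra ℤ_[p] C)*hmi) - hda
end

section
/- Let p be an odd prime, r a positive divisor of p−1, and d, e positive integers with d ∣ e, e ∣ r, and e even. Let C_r be a cyclic group of order r with generator τ and C₂ a cyclic group of order 2 with generator j. Then in the commutative ring ℤ_p[C_r × C₂], the ideal generated by (τ^{r/e}·j)^{e/d} − 1, 1 − τ^{-r/e}·j + pd, and j + 1 equals the ideal generated by p, 1 + τ^{-r/e}, and j + 1. -/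
theorem padic_key' (p : ℕ) [Fact p.Prime] (d e n : ℕ) (hdn : d * n = e)
    (hpe : ¬ p ∣ e) :
    ((1 + ((p * d : ℕ) : ℤ_[p])) ^ n - 1) ∣ ((p : ℕ) : ℤ_[p]) := by
  set a : ℤ_[p] := 1 + ((p * d : ℕ) : ℤ_[p]) with ha
  have ha1 : a - 1 = (p : ℤ_[p]) * d := by rw [ha]; push_cast; ring
  have hx : a ^ n - 1 = (p : ℤ_[p]) * ((d : ℤ_[p]) * (∑ i ∈ Finset.range n, a ^ i)) := by
    rw [← geom_sum_mul a n, ha1]; ring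
  have hdvdS : (p : ℤ_[p]) ∣ (∑ i ∈ Finset.range n, a ^ i) - (n : ℤ_[p]) := by
    have h1 : (∑ i ∈ Finset.range n, a ^ i) - (n : ℤ_[p])
        = ∑ i ∈ Finset.range n, (a ^ i - 1) := by
      rw [Finset.sum_sub_distrib]; simp
    rw [h1]
    refine Finset.dvd_sum fun i _ => ?_
    have h2 : a - 1 ∣ a ^ i - 1 := by simpa using sub_dvd_pow_sub_pow a 1 i
    exact dvd_trans ⟨(d : ℤ_[p]), ha1⟩ h2
  have hunit : IsUnit ((d : ℤ_[p]) * (∑ i ∈ Finset.range n, a ^ i)) := by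
    by_contra hnot
    have hmem : (d : ℤ_[p]) * (∑ i ∈ Finset.range n, a ^ i) ∈ IsLocalRing.maximalIdeal ℤ_[p] :=
      (IsLocalRing.mem_maximalIdeal _).mpr (mem_nonunits_iff.mpr hnot)
    rw [PadicInt.maximalIdeal_eq_span_p, Ideal.mem_span_singleton] at hmem
    have h3 : (p : ℤ_[p]) ∣ (d : ℤ_[p]) * ((∑ i ∈ Finset.range n, a ^ i) - (n : ℤ_[p])) :=
      hdvdS.mul_left _
    have hpeZ : (p : ℤ_[p]) ∣ (e : ℤ_[p]) := by
      have h5 : (e : ℤ_[p]) = (d : ℤ_[p]) * (∑ i ∈ Finset.range n, a ^ i)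
          - (d : ℤ_[p]) * ((∑ i ∈ Finset.range n, a ^ i) - (n : ℤ_[p])) := by
        push_cast [← hdn]; ring
      rw [h5]
      exact dvd_sub hmem h3
    apply hpe
    obtain ⟨c, hc⟩ := hpeZ
    have h6 := congrArg PadicInt.toZMod hc
    rw [map_mul, map_natCast, map_natCast, ZMod.natCast_self, zero_mul] at h6
    exact (ZMod.natCast_eq_zero_iff e p).mp h6
  obtain ⟨u, hu⟩ := hunit
  exact ⟨(↑u⁻¹ : ℤ_[p]), by rw [hx, ← hu, mul_assoc, Units.mul_inv, mul_one]⟩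

theorem span_eq_aux' {A : Type*} [CommRing A] (T Ti J P D : A) (n : ℕ)
    (hTTi : T * Ti = 1)
    (hdvd : ((1 + P * D) ^ n - 1) ∣ P) :
    Ideal.span {(T * J) ^ n - 1, 1 - Ti * J + P * D, J + 1} =
      Ideal.span {P, 1 + Ti, J + 1} := by
  obtain ⟨y, hy⟩ := hdvd
  apply le_antisymm
  · rw [Ideal.span_le]
    simp only [Set.insert_subset_iff, Set.singleton_subset_iff, SetLike.mem_coe]
    set I := Ideal.span ({P, 1 + Ti, J + 1} : Set A) with hI
    have e1 : Ideal.Quotient.mk I P = 0 :=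
      Ideal.Quotient.eq_zero_iff_mem.mpr (Ideal.subset_span (by simp))
    have e2 : Ideal.Quotient.mk I (1 + Ti) = 0 :=
      Ideal.Quotient.eq_zero_iff_mem.mpr (Ideal.subset_span (by simp))
    have e3 : Ideal.Quotient.mk I (J + 1) = 0 :=
      Ideal.Quotient.eq_zero_iff_mem.mpr (Ideal.subset_span (by simp))
    rw [map_add, map_one] at e2
    rw [map_add, map_one] at e3
    have hab : Ideal.Quotient.mk I T * Ideal.Quotient.mk I Ti = 1 := by
      rw [← map_mul, hTTi, map_one]
    have ha : Ideal.Quotient.mk I T = -1 := by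
      linear_combination (Ideal.Quotient.mk I T) * e2 - hab
    have hc : Ideal.Quotient.mk I J = -1 := by linear_combination e3
    refine ⟨?_, ?_, Ideal.subset_span (by simp)⟩
    · rw [← Ideal.Quotient.eq_zero_iff_mem, map_sub, map_one, map_pow, map_mul, ha, hc]
      norm_num
    · rw [← Ideal.Quotient.eq_zero_iff_mem, map_add, map_sub, map_one, map_mul, map_mul,
        hc, e1]
      linear_combination e2
  · rw [Ideal.span_le]
    simp only [Set.insert_subset_iff, Set.singleton_subset_iff, SetLike.mem_coe]
    set I := Ideal.span ({(T * J) ^ n - 1, 1 - Ti * J + P * D, J + 1} : Set A) with hI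
    have e1 : Ideal.Quotient.mk I ((T * J) ^ n - 1) = 0 :=
      Ideal.Quotient.eq_zero_iff_mem.mpr (Ideal.subset_span (by simp))
    have e2 : Ideal.Quotient.mk I (1 - Ti * J + P * D) = 0 :=
      Ideal.Quotient.eq_zero_iff_mem.mpr (Ideal.subset_span (by simp))
    have e3 : Ideal.Quotient.mk I (J + 1) = 0 :=
      Ideal.Quotient.eq_zero_iff_mem.mpr (Ideal.subset_span (by simp))
    rw [map_sub, map_one, map_pow, map_mul] at e1
    rw [map_add, map_sub, map_one, map_mul, map_mul] at e2
    rw [map_add, map_one] at e3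
    have hab : Ideal.Quotient.mk I T * Ideal.Quotient.mk I Ti = 1 := by
      rw [← map_mul, hTTi, map_one]
    have hc : Ideal.Quotient.mk I J = -1 := by linear_combination e3
    have hb : Ideal.Quotient.mk I Ti
        = -(1 + Ideal.Quotient.mk I P * Ideal.Quotient.mk I D) := by
      linear_combination e2 + (Ideal.Quotient.mk I Ti) * hc
    have habn : Ideal.Quotient.mk I T ^ n * Ideal.Quotient.mk I Ti ^ n = 1 := by
      rw [← mul_pow, hab, one_pow]
    have hacn : Ideal.Quotient.mk I T ^ n * Ideal.Quotient.mk I J ^ n = 1 := by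
      rw [← mul_pow]; linear_combination e1
    have hbn : Ideal.Quotient.mk I Ti ^ n = (-1 : A ⧸ I) ^ n := by
      calc Ideal.Quotient.mk I Ti ^ n
          = (Ideal.Quotient.mk I T ^ n * Ideal.Quotient.mk I J ^ n)
            * Ideal.Quotient.mk I Ti ^ n := by rw [hacn, one_mul]
        _ = (Ideal.Quotient.mk I T ^ n * Ideal.Quotient.mk I Ti ^ n)
            * Ideal.Quotient.mk I J ^ n := by ring
        _ = (-1 : A ⧸ I) ^ n := by rw [habn, one_mul, hc]
    have hkey : (1 + Ideal.Quotient.mk I P * Ideal.Quotient.mk I D) ^ n = 1 := by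
      calc (1 + Ideal.Quotient.mk I P * Ideal.Quotient.mk I D) ^ n
          = (-(Ideal.Quotient.mk I Ti)) ^ n := by rw [hb, neg_neg]
        _ = (-1 : A ⧸ I) ^ n * Ideal.Quotient.mk I Ti ^ n := by rw [← neg_one_mul, mul_pow]
        _ = (-1 : A ⧸ I) ^ n * (-1 : A ⧸ I) ^ n := by rw [hbn]
        _ = 1 := by rw [← mul_pow]; norm_num
    have hxmem : (1 + P * D) ^ n - 1 ∈ I := by
      rw [← Ideal.Quotient.eq_zero_iff_mem, map_sub, map_one, map_pow, map_add, map_one,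
        map_mul, hkey, sub_self]
    have hPmem : P ∈ I := by
      rw [hy]
      exact Ideal.mul_mem_right _ _ hxmem
    refine ⟨hPmem, ?_, Ideal.subset_span (by simp)⟩
    rw [← Ideal.Quotient.eq_zero_iff_mem, map_add, map_one, hb]
    have hP0 : Ideal.Quotient.mk I P = 0 := Ideal.Quotient.eq_zero_iff_mem.mpr hPmem
    rw [hP0]
    ring

/-- In `ℤ_p[C_r × C₂]` (`p` an odd prime, `r ∣ p − 1`, `d ∣ e ∣ r`, `e` even),
the ideal generated by `(τ^{r/e}·j)^{e/d} − 1`, `1 − τ^{-r/e}·j + pd` and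
`j + 1` equals the ideal generated by `p`, `1 + τ^{-r/e}` and `j + 1`. -/
theorem ideal_eq_case_II (p : ℕ) [Fact p.Prime] (hodd : Odd p)
    (r : ℕ) (hr : 0 < r) (hrp : r ∣ p - 1)
    (d e : ℕ) (hd : 0 < d) (hde : d ∣ e) (her : e ∣ r) (heven : Even e)
    (C : Type) [CommGroup C] (τ : C)
    (hcard : Nat.card C = r) (hτ : ∀ x : C, x ∈ Subgroup.zpowers τ)
    (C₂ : Type) [CommGroup C₂] (j : C₂)
    (hcard₂ : Nat.card C₂ = 2) (hj : ∀ x : C₂, x ∈ Subgroup.zpowers j) :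
    Ideal.span
      {MonoidAlgebra.of ℤ_[p] (C × C₂) (((τ ^ (r / e), j) : C × C₂) ^ (e / d)) - 1,
       (1 : MonoidAlgebra ℤ_[p] (C × C₂)) -
         MonoidAlgebra.of ℤ_[p] (C × C₂) (((τ ^ (r / e))⁻¹, j)) +
         ((p * d : ℕ) : MonoidAlgebra ℤ_[p] (C × C₂)),
       MonoidAlgebra.of ℤ_[p] (C × C₂) (((1 : C), j)) + 1} =
    Ideal.span
      {((p : ℕ) : MonoidAlgebra ℤ_[p] (C × C₂)),
       (1 : MonoidAlgebra ℤ_[p] (C × C₂)) +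
         MonoidAlgebra.of ℤ_[p] (C × C₂) (((τ ^ (r / e))⁻¹, 1)),
       MonoidAlgebra.of ℤ_[p] (C × C₂) (((1 : C), j)) + 1} := by
  have hp : p.Prime := Fact.out
  have he0 : 0 < e := Nat.pos_of_dvd_of_pos her hr
  have hpe : ¬ p ∣ e := by
    intro h
    have h1 : e ≤ p - 1 := Nat.le_of_dvd (by have := hp.two_le; omega) (her.trans hrp)
    have h2 : p ≤ e := Nat.le_of_dvd he0 h
    have := hp.two_le
    omega
  have hsplit1 : ((τ ^ (r / e), j) : C × C₂) = (τ ^ (r / e), 1) * (1, j) := by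
    simp [Prod.mk_mul_mk]
  have hsplit2 : (((τ ^ (r / e))⁻¹, j) : C × C₂) = ((τ ^ (r / e))⁻¹, 1) * (1, j) := by
    simp [Prod.mk_mul_mk]
  rw [hsplit1, hsplit2, map_pow, map_mul, map_mul, Nat.cast_mul]
  have hTTi : MonoidAlgebra.of ℤ_[p] (C × C₂) ((τ ^ (r / e), 1) : C × C₂) *
      MonoidAlgebra.of ℤ_[p] (C × C₂) (((τ ^ (r / e))⁻¹, 1) : C × C₂) = 1 := by
    rw [← map_mul, Prod.mk_mul_mk, mul_inv_cancel, mul_one, Prod.mk_one_one, map_one]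
  have hdvdA : ((1 + ((p : ℕ) : MonoidAlgebra ℤ_[p] (C × C₂)) *
        ((d : ℕ) : MonoidAlgebra ℤ_[p] (C × C₂))) ^ (e / d) - 1) ∣
      ((p : ℕ) : MonoidAlgebra ℤ_[p] (C × C₂)) := by
    have hkey := padic_key' p d e (e / d) (Nat.mul_div_cancel' hde) hpe
    have := map_dvd (algebraMap ℤ_[p] (MonoidAlgebra ℤ_[p] (C × C₂))) hkey
    simpa only [map_sub, map_pow, map_add, map_one, map_mul, map_natCast, Nat.cast_mul] using this
  exact span_eq_aux' _ _ _ _ _ _ hTTi hdvdA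
end

section
/- Let r be a positive integer. For each positive divisor e of r, let v(e) ∈ ℤ^r have i-th component (1 ≤ i ≤ r) equal to 1 if e ∣ i and 0 otherwise; for each even positive divisor e of r, let v'(e) ∈ ℤ^r have i-th component equal to 1 if (e/2) ∣ i and e ∤ i, and 0 otherwise. Then the family consisting of the vectors v(e) for those divisors e of r with 2e ∤ r, together with the vectors v'(e) for the even divisors e of r, is linearly independent over ℤ, and this family has exactly σ₀(r) members, where σ₀(r) is the number of positive divisors of r. -/
/-- For a positive divisor `e` of `r`, `v(e) ∈ ℤ^r` has `i`-th component `1` if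
`e ∣ i` and `0` otherwise; for an even positive divisor `e` of `r`, `v'(e)` has
`i`-th component `1` if `(e/2) ∣ i` and `e ∤ i`, and `0` otherwise.  The family
consisting of the `v(e)` for divisors `e` of `r` with `2e ∤ r` together with the
`v'(e)` for even divisors `e` of `r` is linearly independent over `ℤ`, and it
has exactly `σ₀(r)` members. -/
theorem admissible_vectors_linearIndependent (r : ℕ) (hr : 0 < r) :
    LinearIndependent ℤ
      (Sum.elim
        (fun (e : {e : ℕ // 0 < e ∧ e ∣ r ∧ ¬ (2 * e ∣ r)}) (i : Fin r) =>
          if (e : ℕ) ∣ (i : ℕ) + 1 then (1 : ℤ) else 0)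
        (fun (e : {e : ℕ // 0 < e ∧ e ∣ r ∧ Even e}) (i : Fin r) =>
          if (e : ℕ) / 2 ∣ (i : ℕ) + 1 ∧ ¬ (e : ℕ) ∣ (i : ℕ) + 1
          then (1 : ℤ) else 0)) ∧
    Nat.card ({e : ℕ // 0 < e ∧ e ∣ r ∧ ¬ (2 * e ∣ r)} ⊕
              {e : ℕ // 0 < e ∧ e ∣ r ∧ Even e}) = r.divisors.card := by
  have hr' : r ≠ 0 := hr.ne'
  have hAiff : ∀ e : ℕ, e ∈ r.divisors.filter (fun e => ¬ 2 * e ∣ r) ↔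
      (0 < e ∧ e ∣ r ∧ ¬ (2 * e ∣ r)) := by
    intro e
    simp only [Finset.mem_filter, Nat.mem_divisors]
    constructor
    · rintro ⟨⟨h1, _⟩, h2⟩
      exact ⟨Nat.pos_of_dvd_of_pos h1 hr, h1, h2⟩
    · rintro ⟨_, h1, h2⟩
      exact ⟨⟨h1, hr'⟩, h2⟩
  have hBiff : ∀ e : ℕ, e ∈ r.divisors.filter (fun e => Even e) ↔
      (0 < e ∧ e ∣ r ∧ Even e) := by
    intro e
    simp only [Finset.mem_filter, Nat.mem_divisors]
    constructor
    · rintro ⟨⟨h1, _⟩, h2⟩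
      exact ⟨Nat.pos_of_dvd_of_pos h1 hr, h1, h2⟩
    · rintro ⟨_, h1, h2⟩
      exact ⟨⟨h1, hr'⟩, h2⟩
  letI fA : Fintype {e : ℕ // 0 < e ∧ e ∣ r ∧ ¬ (2 * e ∣ r)} := Fintype.ofFinset _ hAiff
  letI fB : Fintype {e : ℕ // 0 < e ∧ e ∣ r ∧ Even e} := Fintype.ofFinset _ hBiff
  constructor
  · rw [Fintype.linearIndependent_iff]
    intro c hc
    have hc' : ∀ i : Fin r, (∑ j, c j •
        (Sum.elim
          (fun (e : {e : ℕ // 0 < e ∧ e ∣ r ∧ ¬ (2 * e ∣ r)}) (i : Fin r) =>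
            if (e : ℕ) ∣ (i : ℕ) + 1 then (1 : ℤ) else 0)
          (fun (e : {e : ℕ // 0 < e ∧ e ∣ r ∧ Even e}) (i : Fin r) =>
            if (e : ℕ) / 2 ∣ (i : ℕ) + 1 ∧ ¬ (e : ℕ) ∣ (i : ℕ) + 1
            then (1 : ℤ) else 0) j i)) = 0 := by
      intro i
      have h := congrFun hc i
      simpa only [Finset.sum_apply, Pi.smul_apply, Pi.zero_apply] using h
    suffices key : ∀ n : ℕ, ∀ j,
        Sum.elim (fun (e : {e : ℕ // 0 < e ∧ e ∣ r ∧ ¬ (2 * e ∣ r)}) => (e : ℕ))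
          (fun (e : {e : ℕ // 0 < e ∧ e ∣ r ∧ Even e}) => (e : ℕ) / 2) j = n → c j = 0 by
      exact fun j => key _ j rfl
    intro n
    induction n using Nat.strong_induction_on with
    | _ n IH =>
    intro j hj
    -- basic facts about n
    have hpos : 0 < n ∧ n ∣ r := by
      cases j with
      | inl e =>
        obtain ⟨h0, h1, _⟩ := e.2
        simp only [Sum.elim_inl] at hj
        exact hj ▸ ⟨h0, h1⟩
      | inr e =>
        obtain ⟨h0, h1, hev⟩ := e.2
        simp only [Sum.elim_inr] at hj
        have h2 : 2 ∣ (e : ℕ) := hev.two_dvd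
        have hle : 2 ≤ (e : ℕ) := Nat.le_of_dvd h0 h2
        subst hj
        exact ⟨Nat.div_pos hle (by norm_num), (Nat.div_dvd_of_dvd h2).trans h1⟩
    obtain ⟨hn0, hnr⟩ := hpos
    have hnler : n ≤ r := Nat.le_of_dvd hr hnr
    set i : Fin r := ⟨n - 1, by omega⟩ with hi
    have hi1 : (i : ℕ) + 1 = n := by
      simp only [hi]
      omega
    have hS := hc' i
    by_cases h2r : 2 * n ∣ r
    · -- diagonal index is inr ⟨2*n, _⟩
      set j₀ : ({e : ℕ // 0 < e ∧ e ∣ r ∧ ¬ (2 * e ∣ r)} ⊕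
          {e : ℕ // 0 < e ∧ e ∣ r ∧ Even e}) :=
        Sum.inr ⟨2 * n, by omega, h2r, even_two_mul n⟩ with hj₀
      have hjj : j = j₀ := by
        cases j with
        | inl e =>
          exfalso
          simp only [Sum.elim_inl] at hj
          exact e.2.2.2 (by rw [hj]; exact h2r)
        | inr e =>
          simp only [Sum.elim_inr] at hj
          obtain ⟨k, hk⟩ := e.2.2.2
          have : (e : ℕ) = 2 * n := by omega
          exact congrArg Sum.inr (Subtype.ext this)
      have hsum := Finset.sum_eq_single (s := Finset.univ)
        (f := fun j' => c j' •
          (Sum.elim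
            (fun (e : {e : ℕ // 0 < e ∧ e ∣ r ∧ ¬ (2 * e ∣ r)}) (i : Fin r) =>
              if (e : ℕ) ∣ (i : ℕ) + 1 then (1 : ℤ) else 0)
            (fun (e : {e : ℕ // 0 < e ∧ e ∣ r ∧ Even e}) (i : Fin r) =>
              if (e : ℕ) / 2 ∣ (i : ℕ) + 1 ∧ ¬ (e : ℕ) ∣ (i : ℕ) + 1
              then (1 : ℤ) else 0) j' i)) j₀
        (by
          intro b _ hb
          cases b with
          | inl e =>
            simp only [Sum.elim_inl, hi1]
            by_cases hdvd : (e : ℕ) ∣ n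
            · have hele : (e : ℕ) ≤ n := Nat.le_of_dvd hn0 hdvd
              rcases lt_or_eq_of_le hele with hlt | heq
              · rw [IH _ hlt (Sum.inl e) (by simp)]
                simp
              · exact absurd (heq ▸ h2r) e.2.2.2
            · rw [if_neg hdvd, smul_zero]
          | inr e =>
            simp only [Sum.elim_inr, hi1]
            by_cases hcond : (e : ℕ) / 2 ∣ n ∧ ¬ (e : ℕ) ∣ n
            · obtain ⟨hd2, hnd⟩ := hcond
              have hle2 : (e : ℕ) / 2 ≤ n := Nat.le_of_dvd hn0 hd2
              rcases lt_or_eq_of_le hle2 with hlt | heq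
              · rw [IH _ hlt (Sum.inr e) (by simp)]
                simp
              · exfalso
                obtain ⟨k, hk⟩ := e.2.2.2
                have : (e : ℕ) = 2 * n := by omega
                exact hb (congrArg Sum.inr (Subtype.ext this))
            · rw [if_neg hcond, smul_zero])
        (by simp)
      rw [hsum] at hS
      have h22 : 2 * n / 2 = n := by omega
      simp only [hj₀, Sum.elim_inr, h22, hi1] at hS
      rw [if_pos ⟨dvd_rfl, fun hdd => by
        have := Nat.le_of_dvd hn0 hdd; omega⟩] at hS
      rw [hjj, hj₀]
      simpa using hS
    · -- diagonal index is inl ⟨n, _⟩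
      set j₀ : ({e : ℕ // 0 < e ∧ e ∣ r ∧ ¬ (2 * e ∣ r)} ⊕
          {e : ℕ // 0 < e ∧ e ∣ r ∧ Even e}) :=
        Sum.inl ⟨n, hn0, hnr, h2r⟩ with hj₀
      have hjj : j = j₀ := by
        cases j with
        | inl e =>
          simp only [Sum.elim_inl] at hj
          exact congrArg Sum.inl (Subtype.ext hj)
        | inr e =>
          exfalso
          simp only [Sum.elim_inr] at hj
          obtain ⟨k, hk⟩ := e.2.2.2
          have he2n : (e : ℕ) = 2 * n := by omega
          exact h2r (he2n ▸ e.2.2.1)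
      have hsum := Finset.sum_eq_single (s := Finset.univ)
        (f := fun j' => c j' •
          (Sum.elim
            (fun (e : {e : ℕ // 0 < e ∧ e ∣ r ∧ ¬ (2 * e ∣ r)}) (i : Fin r) =>
              if (e : ℕ) ∣ (i : ℕ) + 1 then (1 : ℤ) else 0)
            (fun (e : {e : ℕ // 0 < e ∧ e ∣ r ∧ Even e}) (i : Fin r) =>
              if (e : ℕ) / 2 ∣ (i : ℕ) + 1 ∧ ¬ (e : ℕ) ∣ (i : ℕ) + 1
              then (1 : ℤ) else 0) j' i)) j₀
        (by
          intro b _ hb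
          cases b with
          | inl e =>
            simp only [Sum.elim_inl, hi1]
            by_cases hdvd : (e : ℕ) ∣ n
            · have hele : (e : ℕ) ≤ n := Nat.le_of_dvd hn0 hdvd
              rcases lt_or_eq_of_le hele with hlt | heq
              · rw [IH _ hlt (Sum.inl e) (by simp)]
                simp
              · exact absurd (congrArg Sum.inl (Subtype.ext heq)) hb
            · rw [if_neg hdvd, smul_zero]
          | inr e =>
            simp only [Sum.elim_inr, hi1]
            by_cases hcond : (e : ℕ) / 2 ∣ n ∧ ¬ (e : ℕ) ∣ n
            · obtain ⟨hd2, hnd⟩ := hcond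
              have hle2 : (e : ℕ) / 2 ≤ n := Nat.le_of_dvd hn0 hd2
              rcases lt_or_eq_of_le hle2 with hlt | heq
              · rw [IH _ hlt (Sum.inr e) (by simp)]
                simp
              · exfalso
                obtain ⟨k, hk⟩ := e.2.2.2
                have he2n : (e : ℕ) = 2 * n := by omega
                exact h2r (he2n ▸ e.2.2.1)
            · rw [if_neg hcond, smul_zero])
        (by simp)
      rw [hsum] at hS
      simp only [hj₀, Sum.elim_inl, hi1] at hS
      rw [if_pos dvd_rfl] at hS
      rw [hjj, hj₀]
      simpa using hS
  · have h1 : Nat.card ({e : ℕ // 0 < e ∧ e ∣ r ∧ ¬ (2 * e ∣ r)} ⊕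
        {e : ℕ // 0 < e ∧ e ∣ r ∧ Even e})
        = Nat.card {e : ℕ // 0 < e ∧ e ∣ r ∧ ¬ (2 * e ∣ r)} +
          Nat.card {e : ℕ // 0 < e ∧ e ∣ r ∧ Even e} := Nat.card_sum
    have cA : Nat.card {e : ℕ // 0 < e ∧ e ∣ r ∧ ¬ (2 * e ∣ r)}
        = (r.divisors.filter (fun e => ¬ 2 * e ∣ r)).card := by
      rw [Nat.card_congr (Equiv.subtypeEquivRight (fun e => (hAiff e).symm)),
        Nat.card_eq_finsetCard]
    have cB : Nat.card {e : ℕ // 0 < e ∧ e ∣ r ∧ Even e}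
        = (r.divisors.filter (fun e => Even e)).card := by
      rw [Nat.card_congr (Equiv.subtypeEquivRight (fun e => (hBiff e).symm)),
        Nat.card_eq_finsetCard]
    have hEB : (r.divisors.filter (fun e => Even e)).card
        = (r.divisors.filter (fun e => 2 * e ∣ r)).card := by
      refine Finset.card_bij' (fun e _ => e / 2) (fun d _ => 2 * d) ?_ ?_ ?_ ?_
      · intro e he
        simp only [Finset.mem_filter, Nat.mem_divisors] at he ⊢
        obtain ⟨⟨h1, _⟩, h2⟩ := he
        have h2' : 2 ∣ e := h2.two_dvd
        have he2 : 2 * (e / 2) = e := Nat.mul_div_cancel' h2'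
        exact ⟨⟨(Nat.div_dvd_of_dvd h2').trans h1, hr'⟩, by rw [he2]; exact h1⟩
      · intro d hd
        simp only [Finset.mem_filter, Nat.mem_divisors] at hd ⊢
        obtain ⟨⟨h1, _⟩, h2⟩ := hd
        exact ⟨⟨h2, hr'⟩, even_two_mul d⟩
      · intro e he
        simp only [Finset.mem_filter, Nat.mem_divisors] at he
        exact Nat.mul_div_cancel' he.2.two_dvd
      · intro d hd
        show 2 * d / 2 = d
        omega
    have split : (r.divisors.filter (fun e => 2 * e ∣ r)).card
        + (r.divisors.filter (fun e => ¬ 2 * e ∣ r)).card = r.divisors.card :=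
      Finset.card_filter_add_card_filter_not _
    omega
end

section
/- Let C be a finite cyclic group with generator φ and let n ≥ 1 be an integer. Then the element g = 1 − φ^{-1} + n is a non-zero-divisor in the group ring ℤ[C], and the quotient ℤ[C]/(g) is a finite ring. Likewise, for every prime p, the element 1 − φ^{-1} + n is a non-zero-divisor in ℤ_p[C] and the quotient ℤ_p[C]/(1 − φ^{-1} + n) is finite. -/
set_option linter.unusedVariables false

open MonoidAlgebra Ideal

lemma helper (R : Type) [CommRing R] (C : Type) [CommGroup C] [Finite C]
    (φ : C) (n : ℕ)
    (hNd : (((n+1)^(Nat.card C) - 1 : ℕ) : R) ∈ nonZeroDivisors R)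
    (hNf : Finite (R ⧸ Ideal.span {(((n+1)^(Nat.card C) - 1 : ℕ) : R)})) :
    ((1 : MonoidAlgebra R C) - MonoidAlgebra.of R C φ⁻¹ + (n : MonoidAlgebra R C)) ∈
        nonZeroDivisors (MonoidAlgebra R C) ∧
      Finite (MonoidAlgebra R C ⧸ Ideal.span {(1 : MonoidAlgebra R C) -
        MonoidAlgebra.of R C φ⁻¹ + (n : MonoidAlgebra R C)}) := by
  set m := Nat.card C with hm
  set N : ℕ := (n+1)^m - 1 with hN
  have h1le : 1 ≤ (n+1)^m := Nat.one_le_pow _ _ (Nat.succ_pos n)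
  set g : MonoidAlgebra R C := 1 - MonoidAlgebra.of R C φ⁻¹ + n with hg
  set y : MonoidAlgebra R C := MonoidAlgebra.of R C φ⁻¹ with hy
  set x : MonoidAlgebra R C := (n : MonoidAlgebra R C) + 1 with hx
  have hxy : x - y = g := by rw [hx, hy, hg]; ring
  have key : (∑ i ∈ Finset.range m, x ^ i * y ^ (m - 1 - i)) * g = (N : MonoidAlgebra R C) := by
    rw [← hxy, geom_sum₂_mul]
    have hyp : y ^ m = 1 := by
      rw [hy, ← map_pow, pow_card_eq_one', map_one]
    have hxp : x ^ m = (((n+1)^m : ℕ) : MonoidAlgebra R C) := by push_cast [hx]; ring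
    rw [hyp, hxp, hN, Nat.cast_sub h1le, Nat.cast_one]
  constructor
  · rw [mem_nonZeroDivisors_iff_right]; intro a ha
    have h2 : a * (N : MonoidAlgebra R C) = 0 := by
      rw [← key, ← mul_assoc, mul_comm a, mul_assoc, ha, mul_zero]
    have h3 : N • a = 0 := by
      rw [nsmul_eq_mul, mul_comm]; exact_mod_cast h2
    ext c
    have h4 : (N • a).coeff c = (0 : MonoidAlgebra R C).coeff c := by rw [h3]
    rw [MonoidAlgebra.coeff_smul_apply, nsmul_eq_mul] at h4
    exact (mem_nonZeroDivisors_iff_right.mp hNd) _ (by rw [mul_comm] at h4; simpa using h4)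
  · -- finiteness
    set J : Ideal (MonoidAlgebra R C) := Ideal.span {g} with hJ
    set I : Ideal R := Ideal.span {((N : ℕ) : R)} with hI
    have hNJ : ((N : ℕ) : MonoidAlgebra R C) ∈ J := by
      rw [← key]; exact Ideal.mul_mem_left _ _ (Ideal.subset_span rfl)
    letI : Fintype C := Fintype.ofFinite C
    have hfinM : Module.Finite R (MonoidAlgebra R C) :=
      Module.Finite.of_basis (MonoidAlgebra.basis C R)
    have hfinQ : Module.Finite R (MonoidAlgebra R C ⧸ J) :=
      Module.Finite.of_surjective (Ideal.Quotient.mkₐ R J).toLinearMap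
        (Ideal.Quotient.mk_surjective)
    -- algebra structure over R ⧸ I
    have hlift : ∀ a ∈ I, (Ideal.Quotient.mk J) (algebraMap R (MonoidAlgebra R C) a) = 0 := by
      intro a haI
      rw [hI, Ideal.mem_span_singleton'] at haI
      obtain ⟨c, rfl⟩ := haI
      rw [_root_.map_mul (algebraMap R (MonoidAlgebra R C)), _root_.map_mul (Ideal.Quotient.mk J)]
      have : (Ideal.Quotient.mk J) (algebraMap R (MonoidAlgebra R C) ((N : ℕ) : R)) = 0 := by
        rw [map_natCast, Ideal.Quotient.eq_zero_iff_mem]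
        exact_mod_cast hNJ
      rw [this, mul_zero]
    letI : Algebra (R ⧸ I) (MonoidAlgebra R C ⧸ J) :=
      (Ideal.Quotient.lift I ((Ideal.Quotient.mk J).comp (algebraMap R (MonoidAlgebra R C)))
        hlift).toAlgebra
    haveI : IsScalarTower R (R ⧸ I) (MonoidAlgebra R C ⧸ J) :=
      IsScalarTower.of_algebraMap_eq (fun r => rfl)
    haveI : Module.Finite (R ⧸ I) (MonoidAlgebra R C ⧸ J) :=
      Module.Finite.of_restrictScalars_finite R _ _
    exact Module.finite_of_finite (R ⧸ I)

lemma padic_quot_finite (p : ℕ) [Fact p.Prime] (N : ℕ) (hN : N ≠ 0) :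
    Finite (ℤ_[p] ⧸ Ideal.span {(N : ℤ_[p])}) := by
  have hx : ((N : ℤ_[p])) ≠ 0 := Nat.cast_ne_zero.mpr hN
  set k := ((N : ℤ_[p]).valuation) with hk
  have hspec := PadicInt.unitCoeff_spec hx
  have hspan : Ideal.span {(N : ℤ_[p])} = Ideal.span {(p : ℤ_[p]) ^ k} := by
    conv_lhs => rw [hspec]
    rw [mul_comm]
    exact Ideal.span_singleton_mul_right_unit (Units.isUnit _) _
  rw [hspan, ← PadicInt.ker_toZModPow k]
  exact Finite.of_injective _ (RingHom.kerLift_injective (PadicInt.toZModPow k))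


/-- For a finite cyclic group `C` with generator `φ` and an integer `n ≥ 1`,
the element `g = 1 − φ⁻¹ + n` is a non-zero-divisor of `ℤ[C]` with finite
quotient `ℤ[C]/(g)`, and likewise over `ℤ_p` for every prime `p`. -/
theorem nonZeroDivisor_and_finite_quotient
    (C : Type) [CommGroup C] [Finite C]
    (φ : C) (hφ : ∀ x : C, x ∈ Subgroup.zpowers φ)
    (n : ℕ) (hn : 1 ≤ n) :
    (((1 : MonoidAlgebra ℤ C) - MonoidAlgebra.of ℤ C φ⁻¹ + (n : MonoidAlgebra ℤ C)) ∈
        nonZeroDivisors (MonoidAlgebra ℤ C) ∧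
      Finite (MonoidAlgebra ℤ C ⧸
        Ideal.span {(1 : MonoidAlgebra ℤ C) - MonoidAlgebra.of ℤ C φ⁻¹ +
          (n : MonoidAlgebra ℤ C)})) ∧
    ∀ (p : ℕ) (hp : Fact p.Prime),
      ((1 : MonoidAlgebra ℤ_[p] C) - MonoidAlgebra.of ℤ_[p] C φ⁻¹ +
          (n : MonoidAlgebra ℤ_[p] C)) ∈ nonZeroDivisors (MonoidAlgebra ℤ_[p] C) ∧
      Finite (MonoidAlgebra ℤ_[p] C ⧸
        Ideal.span {(1 : MonoidAlgebra ℤ_[p] C) - MonoidAlgebra.of ℤ_[p] C φ⁻¹ +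
          (n : MonoidAlgebra ℤ_[p] C)}) := by
  have hm : 1 ≤ Nat.card C := Nat.card_pos
  have h2 : 2 ≤ (n+1) ^ (Nat.card C) := by
    calc 2 ≤ n + 1 := by omega
    _ = (n+1) ^ 1 := (pow_one _).symm
    _ ≤ (n+1) ^ (Nat.card C) := Nat.pow_le_pow_right (by omega) hm
  have hNne : ((n+1) ^ (Nat.card C) - 1 : ℕ) ≠ 0 := by omega
  constructor
  · refine helper ℤ C φ n (mem_nonZeroDivisors_of_ne_zero (Int.natCast_ne_zero.mpr hNne)) ?_
    haveI : NeZero ((n+1) ^ (Nat.card C) - 1 : ℕ) := ⟨hNne⟩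
    exact Finite.of_equiv _ (Int.quotientSpanNatEquivZMod _).symm.toEquiv
  · intro p hp
    exact helper ℤ_[p] C φ n
      (mem_nonZeroDivisors_of_ne_zero (Nat.cast_ne_zero.mpr hNne))
      (padic_quot_finite p _ hNne)
end
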